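/- arXiv:math/0204220 — 8 statements merged into one kernel-verified Lean document; each statement's English description precedes it below -/
import Mathlib

section
/- Let G be a finitely generated infinite group with finite symmetric generating set S, and suppose G has a central element of infinite order. For any 1 ≤ p < ∞, every harmonic function α ∈ D^p(G) is constant; that is, LHD^p(G) = ℂ. -/
/-!
For a central element `y`, the increment `β x = α (x * y) - α x` is again harmonic, and it lies
in `ℓ^p` because the translations along which `α` has `ℓ^p` increments form a subgroup. A real
harmonic function tending to zero at infinity on an infinite group vanishes: its set of maximizers
would be finite, yet invariant under right translation by the generators. So `α` is
`y`-invariant, hence every increment `x ↦ α (x * g⁻¹) - α x` is constant along the infinite orbit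
`x * y ^ n`; tending to zero at infinity, it vanishes, and `α` is constant.
-/

open Filter Set Topology

theorem Summable.norm_add_rpow {ι E : Type*} [NormedAddCommGroup E] {p : ℝ} (hp : 0 < p)
    {f g : ι → E} (hf : Summable fun i => ‖f i‖ ^ p) (hg : Summable fun i => ‖g i‖ ^ p) :
    Summable fun i => ‖f i + g i‖ ^ p := by
  have hq : (ENNReal.ofReal p).toReal = p := ENNReal.toReal_ofReal hp.le
  have hq0 : 0 < (ENNReal.ofReal p).toReal := by rwa [hq]
  have hfg := ((memℓp_gen_iff hq0).2 (hq ▸ hf)).add ((memℓp_gen_iff hq0).2 (hq ▸ hg))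
  simpa [hq] using hfg.summable hq0

theorem tendsto_cofinite_zero_of_summable_norm_rpow {ι E : Type*} [NormedAddCommGroup E]
    {p : ℝ} (hp : 0 < p) {f : ι → E} (hf : Summable fun i => ‖f i‖ ^ p) :
    Tendsto f cofinite (𝓝 0) := by
  rw [tendsto_zero_iff_norm_tendsto_zero]
  have hroot : Tendsto (fun i => (‖f i‖ ^ p) ^ p⁻¹) cofinite (𝓝 ((0 : ℝ) ^ p⁻¹)) :=
    ((Real.continuous_rpow_const (inv_nonneg.2 hp.le)).tendsto 0).comp hf.tendsto_cofinite_zero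
  simpa [Real.rpow_rpow_inv (norm_nonneg _) hp.ne', Real.zero_rpow (inv_ne_zero hp.ne')]
    using hroot

section Group

variable {G : Type*} [Group G]

theorem summable_norm_sub_rpow_of_mem_closure {E : Type*} [NormedAddCommGroup E] {p : ℝ}
    (hp : 0 < p) {f : G → E} {T : Set G}
    (hT : ∀ g ∈ T, Summable fun x => ‖f (x * g) - f x‖ ^ p) {z : G}
    (hz : z ∈ Subgroup.closure T) : Summable fun x => ‖f (x * z) - f x‖ ^ p := by
  induction hz using Subgroup.closure_induction with
  | mem g hg => exact hT g hg
  | one => simp [Real.zero_rpow hp.ne']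
  | mul a b _ _ ha hb =>
    have hb' : Summable fun x => ‖f (x * a * b) - f (x * a)‖ ^ p :=
      (Equiv.mulRight a).summable_iff.2 hb
    refine (hb'.norm_add_rpow hp ha).congr fun x => ?_
    rw [sub_add_sub_cancel, mul_assoc]
  | inv a _ ha =>
    refine ((Equiv.mulRight a⁻¹).summable_iff.2 ha).congr fun x => ?_
    simp [norm_sub_rev]

theorem Set.Finite.mapsTo_mul_right_of_mem_closure {s : Set G} (hs : s.Finite) {T : Set G}
    (hT : ∀ g ∈ T, MapsTo (· * g) s s) {z : G} (hz : z ∈ Subgroup.closure T) :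
    MapsTo (· * z) s s := by
  induction hz using Subgroup.closure_induction with
  | mem g hg => exact hT g hg
  | one => exact fun x hx => by simpa using hx
  | mul a b _ _ ha hb => exact fun x hx => by simpa [mul_assoc] using hb (ha hx)
  | inv a _ ha =>
    -- a finite set mapped injectively into itself is mapped onto itself
    intro x hx
    obtain ⟨w, hw, rfl⟩ :=
      ((hs.injOn_iff_bijOn_of_mapsTo ha).1 (mul_left_injective a).injOn).surjOn hx
    simpa using hw

theorem forall_mul_right_eq_of_closure_eq_top {α : Type*} {f : G → α} {T : Set G}
    (hT : Subgroup.closure T = ⊤) (h : ∀ g ∈ T, ∀ x, f (x * g) = f x) (x z : G) :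
    f (x * z) = f x := by
  induction (hT ▸ Subgroup.mem_top z : z ∈ Subgroup.closure T) using Subgroup.closure_induction
    generalizing x with
  | mem g hg => exact h g hg x
  | one => rw [mul_one]
  | mul a b _ _ ha hb => rw [← mul_assoc, hb, ha]
  | inv a _ ha => rw [← ha, inv_mul_cancel_right]

theorem eq_of_tendsto_cofinite_of_mul_right_invariant {X : Type*} [TopologicalSpace X]
    [T2Space X] {f : G → X} {c : X} (hf : Tendsto f cofinite (𝓝 c)) {y : G}
    (hy : ¬IsOfFinOrder y) (h : ∀ x, f (x * y) = f x) (x : G) : f x = c := by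
  have horbit : Function.Injective fun n : ℕ => x * y ^ n :=
    (mul_right_injective x).comp (injective_pow_iff_not_isOfFinOrder.2 hy)
  have hconst : (fun n : ℕ => f (x * y ^ n)) = fun _ => f x := by
    funext n
    induction n with
    | zero => rw [pow_zero, mul_one]
    | succ n ih => rw [pow_succ, ← mul_assoc, h, ih]
  have hlim : Tendsto (fun n : ℕ => f (x * y ^ n)) atTop (𝓝 c) :=
    Nat.cofinite_eq_atTop ▸ hf.comp horbit.tendsto_cofinite
  exact tendsto_nhds_unique tendsto_const_nhds (hconst ▸ hlim)

def IsHarmonic {M : Type*} [AddCommGroup M] (S : Finset G) (f : G → M) : Prop :=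
  ∀ x, ∑ g ∈ S, (f (x * g⁻¹) - f x) = 0

namespace IsHarmonic

variable {M N : Type*} [AddCommGroup M] [AddCommGroup N] {S : Finset G}

theorem map {f : G → M} (hf : IsHarmonic S f) (φ : M →+ N) : IsHarmonic S fun x => φ (f x) :=
  fun x => by simp only [← map_sub, ← map_sum, hf x, map_zero]

theorem neg {f : G → M} (hf : IsHarmonic S f) : IsHarmonic S fun x => -f x :=
  hf.map (-AddMonoidHom.id M)

theorem sub {f f' : G → M} (hf : IsHarmonic S f) (hf' : IsHarmonic S f') :
    IsHarmonic S fun x => f x - f' x :=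
  fun x => by simp only [sub_sub_sub_comm, Finset.sum_sub_distrib, hf x, hf' x, sub_zero]

theorem comp_mul_right {f : G → M} (hf : IsHarmonic S f) {y : G} (hy : y ∈ Subgroup.center G) :
    IsHarmonic S fun x => f (x * y) := fun x => by
  simpa only [mul_assoc, Subgroup.mem_center_iff.1 hy] using hf (x * y)

theorem mapsTo_mul_inv_setOf_eq_max {u : G → ℝ} (hu : IsHarmonic S u) {m : G}
    (hm : ∀ x, u x ≤ u m) {g : G} (hg : g ∈ S) :
    MapsTo (· * g⁻¹) {x | u x = u m} {x | u x = u m} := by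
  intro x (hx : u x = u m)
  have hterm_nonpos : ∀ h ∈ S, u (x * h⁻¹) - u x ≤ 0 := fun h _ => by linarith [hm (x * h⁻¹)]
  have := (Finset.sum_eq_zero_iff_of_nonpos hterm_nonpos).1 (hu x) g hg
  exact (sub_eq_zero.1 this).trans hx

theorem infinite_setOf_eq_max [Infinite G] (hS : Subgroup.closure (S : Set G) = ⊤) {u : G → ℝ}
    (hu : IsHarmonic S u) {m : G} (hm : ∀ x, u x ≤ u m) : {x | u x = u m}.Infinite := by
  intro hfin
  have hgen : Subgroup.closure (S : Set G)⁻¹ = ⊤ := by rwa [Subgroup.closure_inv]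
  have hinv : ∀ g ∈ (S : Set G)⁻¹, MapsTo (· * g) {x | u x = u m} {x | u x = u m} :=
    fun g hg => by simpa using hu.mapsTo_mul_inv_setOf_eq_max hm (g := g⁻¹) hg
  refine infinite_univ (hfin.subset fun z _ => ?_)
  have hz := hfin.mapsTo_mul_right_of_mem_closure hinv (hgen ▸ Subgroup.mem_top (m⁻¹ * z))
    (show u m = u m from rfl)
  simpa only [mul_inv_cancel_left] using hz

theorem nonpos_of_tendsto_cofinite [Infinite G] (hS : Subgroup.closure (S : Set G) = ⊤)
    {u : G → ℝ} (hu : IsHarmonic S u) (h0 : Tendsto u cofinite (𝓝 0)) (x₀ : G) : u x₀ ≤ 0 := by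
  by_contra! hx₀
  have hfin : {x | u x₀ ≤ u x}.Finite := by
    simpa using eventually_cofinite.1 (h0.eventually (gt_mem_nhds hx₀))
  obtain ⟨m, hmF, hmax⟩ := exists_max_image _ u hfin ⟨x₀, le_refl (u x₀)⟩
  have hm : ∀ x, u x ≤ u m := fun x => by
    by_cases hx : u x₀ ≤ u x
    · exact hmax x hx
    · linarith [hmF.out]
  refine hu.infinite_setOf_eq_max hS hm (hfin.subset fun x (hx : u x = u m) => ?_)
  exact hmF.out.trans hx.ge

theorem eq_zero_of_tendsto_cofinite [Infinite G] (hS : Subgroup.closure (S : Set G) = ⊤)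
    {u : G → ℝ} (hu : IsHarmonic S u) (h0 : Tendsto u cofinite (𝓝 0)) : u = 0 := by
  have h0' : Tendsto (fun x => -u x) cofinite (𝓝 0) := by simpa using h0.neg
  funext x
  exact le_antisymm (hu.nonpos_of_tendsto_cofinite hS h0 x)
    (neg_nonpos.1 (hu.neg.nonpos_of_tendsto_cofinite hS h0' x))

theorem eq_zero_of_tendsto_cofinite_complex [Infinite G] (hS : Subgroup.closure (S : Set G) = ⊤)
    {f : G → ℂ} (hf : IsHarmonic S f) (h0 : Tendsto f cofinite (𝓝 0)) : f = 0 := by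
  have hre := (hf.map Complex.reAddGroupHom).eq_zero_of_tendsto_cofinite hS
    (by simpa [Function.comp_def] using (Complex.continuous_re.tendsto 0).comp h0)
  have him := (hf.map Complex.imAddGroupHom).eq_zero_of_tendsto_cofinite hS
    (by simpa [Function.comp_def] using (Complex.continuous_im.tendsto 0).comp h0)
  funext x
  exact Complex.ext (congr_fun hre x) (congr_fun him x)

end IsHarmonic

end Group

theorem LHDp_eq_const_general {G : Type*} [Group G] (S : Finset G)
    (hgen : Subgroup.closure (S : Set G) = ⊤)
    (y : G) (hy : y ∈ Subgroup.center G) (hyord : ¬ IsOfFinOrder y)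
    (p : ℝ) (hp : 1 ≤ p) (α : G → ℂ)
    (hmem : ∀ g ∈ S, Summable (fun x : G => ‖α (x * g⁻¹) - α x‖ ^ p))
    (hharm : ∀ x : G, ∑ g ∈ S, (α (x * g⁻¹) - α x) = 0) :
    ∃ c : ℂ, ∀ x : G, α x = c := by
  have hp0 : 0 < p := one_pos.trans_le hp
  have : Infinite G := Infinite.of_injective _ (injective_pow_iff_not_isOfFinOrder.2 hyord)
  have hgen_inv : Subgroup.closure (S : Set G)⁻¹ = ⊤ := by rwa [Subgroup.closure_inv]
  have hincr : Summable fun x => ‖α (x * y) - α x‖ ^ p :=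
    summable_norm_sub_rpow_of_mem_closure hp0 (fun g hg => by simpa using hmem g⁻¹ hg)
      (hgen_inv ▸ Subgroup.mem_top y)
  have hαy : ∀ x, α (x * y) = α x := fun x => sub_eq_zero.1 <| congr_fun
    (((IsHarmonic.comp_mul_right hharm hy).sub hharm).eq_zero_of_tendsto_cofinite_complex hgen
      (tendsto_cofinite_zero_of_summable_norm_rpow hp0 hincr)) x
  have hperiod : ∀ g ∈ (S : Set G)⁻¹, ∀ x, α (x * g) = α x := fun g hg x => by
    have hδ := eq_of_tendsto_cofinite_of_mul_right_invariant
      (tendsto_cofinite_zero_of_summable_norm_rpow hp0 (hmem g⁻¹ hg)) hyord (fun x => by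
        rw [mul_assoc, ← Subgroup.mem_center_iff.1 hy, ← mul_assoc, hαy, hαy]) x
    simpa [sub_eq_zero] using hδ
  exact ⟨α 1, fun x => by simpa using forall_mul_right_eq_of_closure_eq_top hgen_inv hperiod 1 x⟩

/-- If `G` has a central element of infinite order, then every harmonic function
in `D^p(G)` (for `1 ≤ p < ∞`) is constant: `LHD^p(G) = ℂ`. -/
theorem LHDp_eq_const {G : Type*} [Group G] (S : Finset G)
    (hsym : ∀ g ∈ S, g⁻¹ ∈ S) (hgen : Subgroup.closure (S : Set G) = ⊤)
    (y : G) (hy : y ∈ Subgroup.center G) (hyord : ¬ IsOfFinOrder y)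
    (p : ℝ) (hp : 1 ≤ p) (α : G → ℂ)
    (hmem : ∀ g ∈ S, Summable (fun x : G => ‖α (x * g⁻¹) - α x‖ ^ p))
    (hharm : ∀ x : G, ∑ g ∈ S, (α (x * g⁻¹) - α x) = 0) :
    ∃ c : ℂ, ∀ x : G, α x = c :=
  LHDp_eq_const_general S hgen y hy hyord p hp α hmem hharm
end

section
/- Let G be an infinite group with finite symmetric generating set S and 1 ≤ p < ∞. If β : G → ℂ is harmonic and β ∈ ℓ^p(G), then β is identically zero. -/
open scoped BigOperators

/-- On an infinite group, a harmonic function in `ℓ^p(G)` is identically zero. -/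
theorem harmonic_lp_eq_zero {G : Type*} [Group G] [Infinite G] (S : Finset G)
    (hsym : ∀ g ∈ S, g⁻¹ ∈ S) (hgen : Subgroup.closure (S : Set G) = ⊤)
    (p : ℝ) (hp : 1 ≤ p) (β : G → ℂ)
    (hharm : ∀ x : G, ∑ g ∈ S, (β (x * g⁻¹) - β x) = 0)
    (hlp : Summable (fun x : G => ‖β x‖ ^ p)) :
    ∀ x : G, β x = 0 := by
  by_contra h
  push_neg at h
  obtain ⟨x₀, hx₀⟩ := h
  have hp0 : 0 < p := lt_of_lt_of_le one_pos hp
  have ht0 : 0 < ‖β x₀‖ := norm_pos_iff.mpr hx₀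
  set t := ‖β x₀‖ with ht
  -- the set where ‖β‖ is at least t is finite
  have hfin : {x : G | t ≤ ‖β x‖}.Finite := by
    have h1 : ∀ᶠ x in Filter.cofinite, ‖β x‖ ^ p < t ^ p :=
      hlp.tendsto_cofinite_zero.eventually
        (gt_mem_nhds (by positivity : (0:ℝ) < t ^ p))
    refine (Filter.eventually_cofinite.mp h1).subset ?_
    intro x hx
    simp only [Set.mem_setOf_eq, not_lt]
    exact Real.rpow_le_rpow (le_of_lt ht0) hx (le_of_lt hp0)
  have hx₀F : x₀ ∈ hfin.toFinset := hfin.mem_toFinset.mpr (le_refl t)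
  obtain ⟨xm, hxmF, hxm⟩ := Finset.exists_max_image hfin.toFinset (fun x => ‖β x‖)
    ⟨x₀, hx₀F⟩
  set M := ‖β xm‖ with hM
  have htM : t ≤ M := by
    have := hxm x₀ hx₀F
    simpa [Set.Finite.mem_toFinset] using this
  have hM0 : 0 < M := lt_of_lt_of_le ht0 htM
  have hbound : ∀ y : G, ‖β y‖ ≤ M := by
    intro y
    by_cases hy : y ∈ hfin.toFinset
    · exact hxm y hy
    · simp only [Set.Finite.mem_toFinset, Set.mem_setOf_eq, not_le] at hy
      exact le_trans hy.le htM
  -- harmonicity in sum form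
  have hsum : ∀ x : G, ∑ g ∈ S, β (x * g⁻¹) = (S.card : ℂ) * β x := by
    intro x
    have := hharm x
    rw [Finset.sum_sub_distrib, sub_eq_zero] at this
    rw [this, Finset.sum_const, nsmul_eq_mul]
  -- equality case: neighbors of a maximum point are maximum points
  have hstep : ∀ x : G, ‖β x‖ = M → ∀ g ∈ S, ‖β (x * g⁻¹)‖ = M := by
    intro x hx g hg
    by_contra hne
    have hlt : ‖β (x * g⁻¹)‖ < M := lt_of_le_of_ne (hbound _) hne
    have h1 : (S.card : ℝ) * M ≤ ∑ g ∈ S, ‖β (x * g⁻¹)‖ := by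
      calc (S.card : ℝ) * M = ‖(S.card : ℂ) * β x‖ := by
            simp [hx, abs_of_nonneg, Complex.norm_natCast]
        _ = ‖∑ g ∈ S, β (x * g⁻¹)‖ := by rw [hsum x]
        _ ≤ ∑ g ∈ S, ‖β (x * g⁻¹)‖ := norm_sum_le _ _
    have h2 : ∑ g ∈ S, ‖β (x * g⁻¹)‖ < ∑ _g ∈ S, M :=
      Finset.sum_lt_sum (fun i _ => hbound _) ⟨g, hg, hlt⟩
    rw [Finset.sum_const, nsmul_eq_mul] at h2
    exact absurd (lt_of_le_of_lt h1 h2) (lt_irrefl _)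
  -- propagate along the group using closure induction
  have hall : ∀ y : G, ‖β (xm * y)‖ = M := by
    intro y
    have hy : y ∈ Subgroup.closure (S : Set G) := by rw [hgen]; trivial
    have key : (∀ x : G, ‖β x‖ = M → ‖β (x * y)‖ = M) ∧
        (∀ x : G, ‖β x‖ = M → ‖β (x * y⁻¹)‖ = M) := by
      induction hy using Subgroup.closure_induction with
      | mem g hg =>
        constructor
        · intro x hx
          have : ‖β (x * (g⁻¹)⁻¹)‖ = M := hstep x hx g⁻¹ (hsym g hg)
          simpa using this
        · intro x hx
          exact hstep x hx g hg
      | one => constructor <;> intro x hx <;> simpa using hx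
      | mul a b ha hb iha ihb =>
        constructor
        · intro x hx
          rw [← mul_assoc]
          exact ihb.1 _ (iha.1 x hx)
        · intro x hx
          rw [mul_inv_rev, ← mul_assoc]
          exact iha.2 _ (ihb.2 x hx)
      | inv a ha iha =>
        exact ⟨fun x hx => iha.2 x hx, fun x hx => by simpa using iha.1 x hx⟩
    exact key.1 xm rfl
  -- hence the whole group lies in a finite set: contradiction
  have : (Set.univ : Set G) ⊆ {x : G | t ≤ ‖β x‖} := by
    intro z _
    have := hall (xm⁻¹ * z)
    rw [← mul_assoc, mul_inv_cancel, one_mul] at this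
    exact le_trans htM this.ge
  exact Set.infinite_univ (hfin.subset this)
end

section
/- Let G be a group with finite symmetric generating set S and t ≥ 2 a real number. For every nonnegative real-valued function α : G → ℝ (with all sums below finite), Σ_{x∈G} Σ_{g∈S} |α(x g⁻¹)^t - α(x)^t| ≤ 2t Σ_{x∈G} α(x)^{t-1} Σ_{g∈S} |α(x g⁻¹) - α(x)|. -/
open scoped BigOperators

lemma rpow_sub_rpow_abs_le (t : ℝ) (ht : 1 ≤ t) {r s : ℝ} (hr : 0 ≤ r) (hs : 0 ≤ s) :
    |r ^ t - s ^ t| ≤ t * (r ^ (t - 1) + s ^ (t - 1)) * |r - s| := by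
  have ht0 : 0 ≤ t := le_trans zero_le_one ht
  -- reduce to the case s ≤ r
  have main : ∀ r s : ℝ, 0 ≤ s → s ≤ r → r ^ t - s ^ t ≤ t * r ^ (t - 1) * (r - s) := by
    intro r s hs hsr
    have hr : 0 ≤ r := hs.trans hsr
    have hderiv : ∀ x ∈ Set.Icc s r,
        HasDerivWithinAt (fun x : ℝ => x ^ t) (t * x ^ (t - 1)) (Set.Icc s r) x := fun x hx =>
      (Real.hasDerivAt_rpow_const (Or.inr ht)).hasDerivWithinAt
    have hbound : ∀ x ∈ Set.Ico s r, ‖t * x ^ (t - 1)‖ ≤ t * r ^ (t - 1) := by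
      intro x hx
      have hx0 : 0 ≤ x := hs.trans hx.1
      rw [Real.norm_eq_abs, abs_of_nonneg (mul_nonneg ht0 (Real.rpow_nonneg hx0 _))]
      exact mul_le_mul_of_nonneg_left
        (Real.rpow_le_rpow hx0 hx.2.le (by linarith)) ht0
    have := norm_image_sub_le_of_norm_deriv_le_segment' hderiv hbound r
      (Set.right_mem_Icc.2 hsr)
    rw [Real.norm_eq_abs] at this
    exact (le_abs_self _).trans this
  rcases le_total s r with h | h
  · have h1 : r ^ t - s ^ t ≤ t * (r ^ (t - 1) + s ^ (t - 1)) * (r - s) := by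
      refine (main r s hs h).trans ?_
      have := Real.rpow_nonneg hs (t - 1)
      nlinarith [mul_nonneg ht0 this, sub_nonneg.2 h]
    rw [abs_of_nonneg (sub_nonneg.2 (Real.rpow_le_rpow hs h ht0)),
        abs_of_nonneg (sub_nonneg.2 h)]
    exact h1
  · have h1 : s ^ t - r ^ t ≤ t * (r ^ (t - 1) + s ^ (t - 1)) * (s - r) := by
      refine (main s r hr h).trans ?_
      have := Real.rpow_nonneg hr (t - 1)
      nlinarith [mul_nonneg ht0 this, sub_nonneg.2 h]
    rw [abs_sub_comm, abs_of_nonneg (sub_nonneg.2 (Real.rpow_le_rpow hr h ht0)),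
        abs_sub_comm r s, abs_of_nonneg (sub_nonneg.2 h)]
    exact h1

/-- `D(1)`-seminorm estimate for pointwise powers: for a nonnegative function `α`
and `t ≥ 2`, `‖α^t‖_{D(1)} ≤ 2t Σ_x α(x)^{t-1} Σ_{g∈S} |α(x g⁻¹) - α(x)|`. -/
theorem D1_seminorm_rpow_le {G : Type*} [Group G] (S : Finset G)
    (hsym : ∀ g ∈ S, g⁻¹ ∈ S)
    (t : ℝ) (ht : 2 ≤ t) (α : G → ℝ) (hα : ∀ x, 0 ≤ α x)
    (hsum₁ : Summable (fun x : G => ∑ g ∈ S, |α (x * g⁻¹) ^ t - α x ^ t|))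
    (hsum₂ : Summable (fun x : G => α x ^ (t - 1) * ∑ g ∈ S, |α (x * g⁻¹) - α x|)) :
    (∑' x : G, ∑ g ∈ S, |α (x * g⁻¹) ^ t - α x ^ t|) ≤
      2 * t * ∑' x : G, α x ^ (t - 1) * ∑ g ∈ S, |α (x * g⁻¹) - α x| := by
  have ht1 : (1 : ℝ) ≤ t := by linarith
  have ht0 : (0 : ℝ) ≤ t := by linarith
  set f₂ : G → ℝ := fun x => α x ^ (t - 1) * ∑ g ∈ S, |α (x * g⁻¹) - α x| with hf₂
  -- per-generator summand after change of variables
  set k : G → G → ℝ := fun g y => α y ^ (t - 1) * |α (y * g) - α y| with hk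
  have hk_le : ∀ g ∈ S, ∀ y, k g y ≤ f₂ y := by
    intro g hg y
    have : |α (y * g) - α y| ≤ ∑ g' ∈ S, |α (y * g'⁻¹) - α y| := by
      have := Finset.single_le_sum (f := fun g' => |α (y * g'⁻¹) - α y|)
        (fun i _ => abs_nonneg _) (hsym g hg)
      simpa using this
    exact mul_le_mul_of_nonneg_left this (Real.rpow_nonneg (hα y) _)
  have hk_nonneg : ∀ g y, 0 ≤ k g y :=
    fun g y => mul_nonneg (Real.rpow_nonneg (hα y) _) (abs_nonneg _)
  have hk_summ : ∀ g ∈ S, Summable (k g) := fun g hg =>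
    hsum₂.of_nonneg_of_le (hk_nonneg g) (hk_le g hg)
  -- h g x = α(xg⁻¹)^{t-1} |α(xg⁻¹) - α x| = k g (x g⁻¹)
  set h : G → G → ℝ := fun g x => α (x * g⁻¹) ^ (t - 1) * |α (x * g⁻¹) - α x| with hh
  have hhk : ∀ g x, h g x = k g (x * g⁻¹) := by
    intro g x
    simp only [h, k, inv_mul_cancel_right, mul_inv_cancel_right]
    rw [abs_sub_comm]
  have hh_summ : ∀ g ∈ S, Summable (h g) := by
    intro g hg
    have : Summable (k g ∘ (Equiv.mulRight g⁻¹)) :=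
      ((Equiv.mulRight g⁻¹).summable_iff).2 (hk_summ g hg)
    refine this.congr fun x => ?_
    simp [hhk g x, Equiv.mulRight]
  have hh_tsum : ∀ g ∈ S, ∑' x, h g x = ∑' y, k g y := by
    intro g hg
    rw [← (Equiv.mulRight g⁻¹).tsum_eq (k g)]
    exact tsum_congr fun x => (hhk g x).symm ▸ rfl
  -- f₃
  set f₃ : G → ℝ := fun x => ∑ g ∈ S, h g x with hf₃
  have hf₃_summ : Summable f₃ := summable_sum fun g hg => hh_summ g hg
  -- sum over S of k g y equals f₂ y (reindex g ↦ g⁻¹)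
  have hkf₂ : ∀ y, ∑ g ∈ S, k g y = f₂ y := by
    intro y
    rw [hf₂]
    rw [← Finset.mul_sum]
    congr 1
    refine Finset.sum_nbij' (fun g => g⁻¹) (fun g => g⁻¹) (fun g hg => hsym g hg)
      (fun g hg => hsym g hg) (fun g _ => inv_inv g) (fun g _ => inv_inv g) ?_
    intro g hg
    simp [k]
  have hf₃_tsum : ∑' x, f₃ x = ∑' x, f₂ x := by
    rw [hf₃]
    rw [Summable.tsum_finsetSum (fun g hg => hh_summ g hg)]
    rw [Finset.sum_congr rfl (fun g hg => hh_tsum g hg)]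
    rw [← Summable.tsum_finsetSum (fun g hg => hk_summ g hg)]
    exact tsum_congr hkf₂
  -- pointwise bound
  have hpt : ∀ x, (∑ g ∈ S, |α (x * g⁻¹) ^ t - α x ^ t|) ≤ t * f₃ x + t * f₂ x := by
    intro x
    have : ∀ g ∈ S, |α (x * g⁻¹) ^ t - α x ^ t| ≤
        t * h g x + t * (α x ^ (t - 1) * |α (x * g⁻¹) - α x|) := by
      intro g hg
      have := rpow_sub_rpow_abs_le t ht1 (hα (x * g⁻¹)) (hα x)
      simp only [h]
      nlinarith [abs_nonneg (α (x * g⁻¹) - α x)]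
    calc (∑ g ∈ S, |α (x * g⁻¹) ^ t - α x ^ t|)
        ≤ ∑ g ∈ S, (t * h g x + t * (α x ^ (t - 1) * |α (x * g⁻¹) - α x|)) :=
          Finset.sum_le_sum this
      _ = t * f₃ x + t * f₂ x := by
          rw [Finset.sum_add_distrib, ← Finset.mul_sum, ← Finset.mul_sum, ← Finset.mul_sum]
  have hsumC : Summable (fun x => t * f₃ x + t * f₂ x) :=
    ((hf₃_summ.mul_left t).add (hsum₂.mul_left t))
  calc (∑' x : G, ∑ g ∈ S, |α (x * g⁻¹) ^ t - α x ^ t|)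
      ≤ ∑' x, (t * f₃ x + t * f₂ x) := Summable.tsum_le_tsum hpt hsum₁ hsumC
    _ = t * (∑' x, f₃ x) + t * (∑' x, f₂ x) := by
        rw [Summable.tsum_add (hf₃_summ.mul_left t) (hsum₂.mul_left t), tsum_mul_left, tsum_mul_left]
    _ = 2 * t * ∑' x, f₂ x := by rw [hf₃_tsum]; ring
end

section
/- Let G be a group with finite symmetric generating set S and d > 2. Suppose there is a constant C > 0 such that ‖α‖_{d/(d-1)} ≤ C Σ_{x∈G} Σ_{g∈S} |α(x g⁻¹) - α(x)| for all finitely supported α : G → ℂ (condition S_d). Then there is a constant C' > 0 such that ‖α‖_{2d/(d-2)} ≤ C' (Σ_{g∈S} Σ_{x∈G} |α(x g⁻¹) - α(x)|²)^{1/2} for all finitely supported α : G → ℂ. -/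
open scoped BigOperators

lemma aux_rpow_mvt {p : ℝ} (hp : 1 ≤ p) {u v : ℝ} (hv : 0 ≤ v) (huv : v ≤ u) :
    u ^ p - v ^ p ≤ p * (u ^ (p - 1) + v ^ (p - 1)) * (u - v) := by
  rcases eq_or_lt_of_le huv with rfl | h
  · simp
  · obtain ⟨c, hc, hceq⟩ := exists_hasDerivAt_eq_slope (fun x => x ^ p)
      (fun x => p * x ^ (p - 1)) h
      (fun x _ => (Real.continuousAt_rpow_const x p (Or.inr (by linarith))).continuousWithinAt)
      (fun x hx => Real.hasDerivAt_rpow_const (Or.inl (lt_of_le_of_lt hv hx.1).ne'))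
    have hc0 : 0 < c := lt_of_le_of_lt hv hc.1
    have heq : u ^ p - v ^ p = p * c ^ (p - 1) * (u - v) := by
      rw [hceq, div_mul_cancel₀ _ (sub_ne_zero.mpr h.ne')]
    rw [heq]
    have h1 : c ^ (p - 1) ≤ u ^ (p - 1) :=
      Real.rpow_le_rpow hc0.le hc.2.le (by linarith)
    have h2 : p * c ^ (p - 1) ≤ p * (u ^ (p - 1) + v ^ (p - 1)) := by
      have := Real.rpow_nonneg hv (p - 1)
      have hp0 : (0:ℝ) ≤ p := by linarith
      nlinarith
    exact mul_le_mul_of_nonneg_right h2 (by linarith)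

lemma aux_rpow_lip {p : ℝ} (hp : 1 ≤ p) {a b : ℝ} (ha : 0 ≤ a) (hb : 0 ≤ b) :
    |a ^ p - b ^ p| ≤ p * (a ^ (p - 1) + b ^ (p - 1)) * |a - b| := by
  rcases le_total b a with h | h
  · rw [abs_of_nonneg (sub_nonneg.mpr (Real.rpow_le_rpow hb h (by linarith))),
      abs_of_nonneg (sub_nonneg.mpr h)]
    exact aux_rpow_mvt hp hb h
  · rw [abs_sub_comm, abs_sub_comm a b,
      abs_of_nonneg (sub_nonneg.mpr (Real.rpow_le_rpow ha h (by linarith))),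
      abs_of_nonneg (sub_nonneg.mpr h)]
    have := aux_rpow_mvt hp ha h
    nlinarith [this]

lemma aux_cs {ι : Type*} (s : Finset ι) (f g : ι → ℝ) (hf : ∀ i, 0 ≤ f i) (hg : ∀ i, 0 ≤ g i) :
    ∑ i ∈ s, f i * g i ≤ Real.sqrt (∑ i ∈ s, f i ^ 2) * Real.sqrt (∑ i ∈ s, g i ^ 2) := by
  rw [← Real.sqrt_mul (Finset.sum_nonneg fun i _ => sq_nonneg _)]
  rw [Real.le_sqrt (Finset.sum_nonneg fun i _ => mul_nonneg (hf i) (hg i))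
    (mul_nonneg (Finset.sum_nonneg fun i _ => sq_nonneg _)
      (Finset.sum_nonneg fun i _ => sq_nonneg _))]
  exact Finset.sum_mul_sq_le_sq_mul_sq s f g

set_option maxHeartbeats 1000000 in
/-- From the `L¹` Sobolev inequality (condition `S_d`) one deduces the `L²`
Sobolev inequality with exponent `2d/(d-2)`. -/
theorem L2_sobolev_of_Sd {G : Type*} [Group G] (S : Finset G)
    (hsym : ∀ g ∈ S, g⁻¹ ∈ S)
    (d : ℝ) (hd : 2 < d) (C : ℝ) (hC : 0 < C)
    (hSd : ∀ α : G → ℂ, (Function.support α).Finite →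
      (∑' x : G, ‖α x‖ ^ (d / (d - 1))) ^ ((d - 1) / d) ≤
        C * ∑' x : G, ∑ g ∈ S, ‖α (x * g⁻¹) - α x‖) :
    ∃ C' : ℝ, 0 < C' ∧ ∀ α : G → ℂ, (Function.support α).Finite →
      (∑' x : G, ‖α x‖ ^ (2 * d / (d - 2))) ^ ((d - 2) / (2 * d)) ≤
        C' * (∑ g ∈ S, ∑' x : G, ‖α (x * g⁻¹) - α x‖ ^ (2 : ℝ)) ^ ((1 : ℝ) / 2) := by
  classical
  have hd2 : (0:ℝ) < d - 2 := by linarith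
  have hd1 : (0:ℝ) < d - 1 := by linarith
  have hd0 : (0:ℝ) < d := by linarith
  set p : ℝ := 2 * (d - 1) / (d - 2) with hp_def
  have hp2 : 2 < p := by rw [hp_def, lt_div_iff₀ hd2]; linarith
  have hp1 : 1 ≤ p := by linarith
  have hp0 : (0:ℝ) < p := by linarith
  set q : ℝ := 2 * d / (d - 2) with hq_def
  have hq0 : (0:ℝ) < q := by positivity
  have harith1 : p * (d / (d - 1)) = q := by
    rw [hp_def, hq_def]; field_simp
  have harith2 : (p - 1) * 2 = q := by
    rw [hp_def, hq_def]; field_simp; ring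
  have harith3 : (d-2)/(2*d) + (1:ℝ)/2 = (d-1)/d := by
    field_simp; ring
  refine ⟨2 * p * C * Real.sqrt S.card + 1, by positivity, ?_⟩
  intro α hfin
  set T : ℝ := ∑' x : G, ‖α x‖ ^ q with hT_def
  have hTterm : ∀ x : G, (0:ℝ) ≤ ‖α x‖ ^ q := fun x => Real.rpow_nonneg (norm_nonneg _) _
  have hT0 : 0 ≤ T := tsum_nonneg hTterm
  set R : ℝ := ∑ g ∈ S, ∑' x : G, ‖α (x * g⁻¹) - α x‖ ^ (2 : ℝ) with hR_def
  have hR0 : 0 ≤ R :=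
    Finset.sum_nonneg fun g _ => tsum_nonneg fun x => Real.rpow_nonneg (norm_nonneg _) _
  set A : Finset G := hfin.toFinset with hA_def
  have hAmem : ∀ x, x ∉ A → α x = 0 := by
    intro x hx; by_contra hne; exact hx (hfin.mem_toFinset.mpr hne)
  -- the finite sets controlling supports of translated functions
  set F : G → Finset G := fun g => A ∪ A.image (· * g) with hF_def
  have hvan : ∀ g : G, ∀ x ∉ F g, α x = 0 ∧ α (x * g⁻¹) = 0 := by
    intro g x hx
    rw [hF_def] at hx
    simp only [Finset.mem_union, Finset.mem_image, not_or, not_exists, not_and] at hx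
    refine ⟨hAmem x hx.1, ?_⟩
    by_contra hne
    exact hx.2 (x * g⁻¹) (hfin.mem_toFinset.mpr hne) (by group)
  -- summability facts
  have hsumT : Summable fun x : G => ‖α x‖ ^ q :=
    summable_of_ne_finset_zero (s := A) fun x hx => by
      rw [hAmem x hx, norm_zero, Real.zero_rpow hq0.ne']
  have hsumTg : ∀ g : G, Summable fun x : G => ‖α (x * g⁻¹)‖ ^ q := by
    intro g
    exact summable_of_ne_finset_zero (s := F g) fun x hx => by
      rw [(hvan g x hx).2, norm_zero, Real.zero_rpow hq0.ne']
  have hTg : ∀ g : G, (∑' x : G, ‖α (x * g⁻¹)‖ ^ q) = T := by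
    intro g
    rw [hT_def]
    exact (Equiv.mulRight g⁻¹).tsum_eq fun x => ‖α x‖ ^ q
  have hsumE : ∀ g : G, Summable fun x : G => ‖α (x * g⁻¹) - α x‖ ^ (2:ℝ) := by
    intro g
    exact summable_of_ne_finset_zero (s := F g) fun x hx => by
      rw [(hvan g x hx).1, (hvan g x hx).2, sub_zero, norm_zero,
        Real.zero_rpow (by norm_num)]
  -- β = |α|^p
  set β : G → ℂ := fun x => ((‖α x‖ ^ p : ℝ) : ℂ) with hβ_def
  have hβvan : ∀ x, α x = 0 → β x = 0 := by
    intro x hx; rw [hβ_def]; simp [hx, Real.zero_rpow hp0.ne']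
  have hβfin : (Function.support β).Finite :=
    hfin.subset (by
      intro x hx
      simp only [Function.mem_support] at hx ⊢
      exact fun h => hx (hβvan x h))
  have HS := hSd β hβfin
  -- rewrite LHS of HS
  have hβnorm : ∀ x, ‖β x‖ = ‖α x‖ ^ p := by
    intro x
    rw [hβ_def]
    simp only [Complex.norm_real, Real.norm_eq_abs]
    exact abs_of_nonneg (Real.rpow_nonneg (norm_nonneg _) _)
  have hLHS : (∑' x : G, ‖β x‖ ^ (d / (d - 1))) = T := by
    rw [hT_def]
    congr 1; funext x
    rw [hβnorm, ← Real.rpow_mul (norm_nonneg _), harith1]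
  rw [hLHS] at HS
  -- summability of β-differences
  have hβsum : ∀ g ∈ S, Summable fun x : G => ‖β (x * g⁻¹) - β x‖ := by
    intro g _
    exact summable_of_ne_finset_zero (s := F g) fun x hx => by
      simp [hβvan _ (hvan g x hx).1, hβvan _ (hvan g x hx).2]
  rw [Summable.tsum_finsetSum hβsum] at HS
  have hrp2 : ∀ r : ℝ, r ^ (2:ℝ) = r ^ (2:ℕ) := fun r => by
    rw [← Real.rpow_natCast r 2]; norm_num
  set Efun : G → ℝ := fun g => ∑' x : G, ‖α (x * g⁻¹) - α x‖ ^ (2:ℝ) with hE_def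
  have hEnn : ∀ g : G, 0 ≤ Efun g :=
    fun g => tsum_nonneg fun x => Real.rpow_nonneg (norm_nonneg _) _
  -- per-generator bound
  have hper : ∀ g ∈ S, (∑' x : G, ‖β (x * g⁻¹) - β x‖) ≤
      2 * p * Real.sqrt T * Real.sqrt (Efun g) := by
    intro g hg
    have e1 : (∑' x : G, ‖β (x * g⁻¹) - β x‖) = ∑ x ∈ F g, ‖β (x * g⁻¹) - β x‖ :=
      tsum_eq_sum fun x hx => by
        simp [hβvan _ (hvan g x hx).1, hβvan _ (hvan g x hx).2]
    have e2 : Efun g = ∑ x ∈ F g, ‖α (x * g⁻¹) - α x‖ ^ (2:ℕ) := by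
      rw [hE_def]
      simp only
      rw [tsum_eq_sum (s := F g) fun x hx => by
        simp [(hvan g x hx).1, (hvan g x hx).2, Real.zero_rpow]]
      exact Finset.sum_congr rfl fun x _ => hrp2 _
    -- pointwise bound
    have hpt : ∀ x : G, ‖β (x * g⁻¹) - β x‖ ≤
        p * ((‖α (x * g⁻¹)‖ ^ (p-1) + ‖α x‖ ^ (p-1)) * ‖α (x * g⁻¹) - α x‖) := by
      intro x
      have h1 : ‖β (x * g⁻¹) - β x‖ = |‖α (x * g⁻¹)‖ ^ p - ‖α x‖ ^ p| := by
        rw [hβ_def]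
        simp only [← Complex.ofReal_sub, Complex.norm_real, Real.norm_eq_abs]
      rw [h1, ← mul_assoc]
      calc |‖α (x * g⁻¹)‖ ^ p - ‖α x‖ ^ p|
          ≤ p * (‖α (x * g⁻¹)‖ ^ (p-1) + ‖α x‖ ^ (p-1)) * |‖α (x * g⁻¹)‖ - ‖α x‖| :=
            aux_rpow_lip hp1 (norm_nonneg _) (norm_nonneg _)
        _ ≤ p * (‖α (x * g⁻¹)‖ ^ (p-1) + ‖α x‖ ^ (p-1)) * ‖α (x * g⁻¹) - α x‖ := by
            apply mul_le_mul_of_nonneg_left (abs_norm_sub_norm_le _ _)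
            positivity
    have hsum1 : (∑ x ∈ F g, ‖β (x * g⁻¹) - β x‖) ≤
        p * ∑ x ∈ F g, (‖α (x * g⁻¹)‖ ^ (p-1) + ‖α x‖ ^ (p-1)) * ‖α (x * g⁻¹) - α x‖ := by
      rw [Finset.mul_sum]
      exact Finset.sum_le_sum fun x _ => hpt x
    have hcs := aux_cs (F g) (fun x => ‖α (x * g⁻¹)‖ ^ (p-1) + ‖α x‖ ^ (p-1))
      (fun x => ‖α (x * g⁻¹) - α x‖)
      (fun x => by positivity) (fun x => norm_nonneg _)
    -- bound the first sqrt by 2 √T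
    have hsq : (∑ x ∈ F g, (‖α (x * g⁻¹)‖ ^ (p-1) + ‖α x‖ ^ (p-1)) ^ 2) ≤ 4 * T := by
      have hpt2 : ∀ x : G, (‖α (x * g⁻¹)‖ ^ (p-1) + ‖α x‖ ^ (p-1)) ^ 2 ≤
          2 * ‖α (x * g⁻¹)‖ ^ q + 2 * ‖α x‖ ^ q := by
        intro x
        have ea : ∀ y : G, (‖α y‖ ^ (p-1)) ^ (2:ℕ) = ‖α y‖ ^ q := by
          intro y
          rw [← Real.rpow_natCast (‖α y‖ ^ (p-1)) 2, ← Real.rpow_mul (norm_nonneg _)]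
          norm_num [harith2]
        rw [add_sq, ea, ea]
        have h1 : ‖α (x * g⁻¹)‖ ^ (p-1) * ‖α x‖ ^ (p-1) ≤
            (‖α (x * g⁻¹)‖ ^ q + ‖α x‖ ^ q) / 2 := by
          have := sq_nonneg (‖α (x * g⁻¹)‖ ^ (p-1) - ‖α x‖ ^ (p-1))
          rw [sub_sq] at this
          rw [← ea x, ← ea (x * g⁻¹)]
          nlinarith
        nlinarith
      calc (∑ x ∈ F g, (‖α (x * g⁻¹)‖ ^ (p-1) + ‖α x‖ ^ (p-1)) ^ 2)
          ≤ ∑ x ∈ F g, (2 * ‖α (x * g⁻¹)‖ ^ q + 2 * ‖α x‖ ^ q) :=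
            Finset.sum_le_sum fun x _ => hpt2 x
        _ = 2 * (∑ x ∈ F g, ‖α (x * g⁻¹)‖ ^ q) + 2 * (∑ x ∈ F g, ‖α x‖ ^ q) := by
            rw [Finset.sum_add_distrib, ← Finset.mul_sum, ← Finset.mul_sum]
        _ ≤ 2 * T + 2 * T := by
            have b1 : (∑ x ∈ F g, ‖α (x * g⁻¹)‖ ^ q) ≤ T := by
              rw [← hTg g]
              exact Summable.sum_le_tsum (F g)
                (fun x _ => Real.rpow_nonneg (norm_nonneg _) _) (hsumTg g)
            have b2 : (∑ x ∈ F g, ‖α x‖ ^ q) ≤ T := by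
              rw [hT_def]
              exact Summable.sum_le_tsum (F g)
                (fun x _ => Real.rpow_nonneg (norm_nonneg _) _) hsumT
            linarith
        _ = 4 * T := by ring
    have hsqrt4 : Real.sqrt (4 * T) = 2 * Real.sqrt T := by
      rw [show (4:ℝ) * T = 2 ^ 2 * T by ring, Real.sqrt_mul (by positivity) T,
        Real.sqrt_sq (by norm_num)]
    calc (∑' x : G, ‖β (x * g⁻¹) - β x‖)
        = ∑ x ∈ F g, ‖β (x * g⁻¹) - β x‖ := e1
      _ ≤ p * ∑ x ∈ F g, (‖α (x * g⁻¹)‖ ^ (p-1) + ‖α x‖ ^ (p-1)) * ‖α (x * g⁻¹) - α x‖ :=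
          hsum1
      _ ≤ p * (Real.sqrt (∑ x ∈ F g, (‖α (x * g⁻¹)‖ ^ (p-1) + ‖α x‖ ^ (p-1)) ^ 2) *
            Real.sqrt (∑ x ∈ F g, ‖α (x * g⁻¹) - α x‖ ^ 2)) :=
          mul_le_mul_of_nonneg_left hcs hp0.le
      _ ≤ p * ((2 * Real.sqrt T) * Real.sqrt (Efun g)) := by
          apply mul_le_mul_of_nonneg_left _ hp0.le
          rw [e2]
          apply mul_le_mul_of_nonneg_right _ (Real.sqrt_nonneg _)
          rw [← hsqrt4]
          exact Real.sqrt_le_sqrt hsq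
      _ = 2 * p * Real.sqrt T * Real.sqrt (Efun g) := by ring
  -- sum over generators, Cauchy-Schwarz in g
  have hgcs : (∑ g ∈ S, Real.sqrt (Efun g)) ≤ Real.sqrt S.card * Real.sqrt R := by
    have := aux_cs S (fun _ => (1:ℝ)) (fun g => Real.sqrt (Efun g))
      (fun _ => zero_le_one) (fun g => Real.sqrt_nonneg _)
    simp only [one_mul, one_pow, Finset.sum_const, nsmul_eq_mul, mul_one] at this
    calc (∑ g ∈ S, Real.sqrt (Efun g)) ≤
        Real.sqrt S.card * Real.sqrt (∑ g ∈ S, Real.sqrt (Efun g) ^ 2) := this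
      _ = Real.sqrt S.card * Real.sqrt R := by
          congr 2
          rw [hR_def]
          exact Finset.sum_congr rfl fun g _ => Real.sq_sqrt (hEnn g)
  have hglobal : T ^ ((d-1)/d) ≤ C * (2 * p * Real.sqrt T * (Real.sqrt S.card * Real.sqrt R)) := by
    calc T ^ ((d-1)/d) ≤ C * ∑ g ∈ S, ∑' x : G, ‖β (x * g⁻¹) - β x‖ := HS
      _ ≤ C * ∑ g ∈ S, 2 * p * Real.sqrt T * Real.sqrt (Efun g) :=
          mul_le_mul_of_nonneg_left (Finset.sum_le_sum hper) hC.le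
      _ = C * (2 * p * Real.sqrt T * ∑ g ∈ S, Real.sqrt (Efun g)) := by
          rw [← Finset.mul_sum]
      _ ≤ C * (2 * p * Real.sqrt T * (Real.sqrt S.card * Real.sqrt R)) := by
          apply mul_le_mul_of_nonneg_left _ hC.le
          exact mul_le_mul_of_nonneg_left hgcs (by positivity)
  -- conclude
  have hRnn : (0:ℝ) ≤ R ^ ((1:ℝ)/2) := Real.rpow_nonneg hR0 _
  rcases eq_or_lt_of_le hT0 with hT | hT
  · rw [← hT, Real.zero_rpow (ne_of_gt (by positivity) : ((d-2)/(2*d)) ≠ 0)]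
    have hC' : (0:ℝ) < 2 * p * C * Real.sqrt S.card + 1 := by positivity
    exact mul_nonneg hC'.le hRnn
  · have hTpow : T ^ ((d-1)/d) = T ^ ((d-2)/(2*d)) * T ^ ((1:ℝ)/2) := by
      rw [← Real.rpow_add hT, harith3]
    rw [hTpow, Real.sqrt_eq_rpow T, Real.sqrt_eq_rpow R] at hglobal
    have h2 : T ^ ((d-2)/(2*d)) * T ^ ((1:ℝ)/2) ≤
        (2 * p * C * Real.sqrt S.card * R ^ ((1:ℝ)/2)) * T ^ ((1:ℝ)/2) := by
      calc T ^ ((d-2)/(2*d)) * T ^ ((1:ℝ)/2)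
          ≤ C * (2 * p * T ^ ((1:ℝ)/2) * (Real.sqrt S.card * R ^ ((1:ℝ)/2))) := hglobal
        _ = (2 * p * C * Real.sqrt S.card * R ^ ((1:ℝ)/2)) * T ^ ((1:ℝ)/2) := by ring
    have h3 : T ^ ((d-2)/(2*d)) ≤ 2 * p * C * Real.sqrt S.card * R ^ ((1:ℝ)/2) :=
      le_of_mul_le_mul_right h2 (Real.rpow_pos_of_pos hT _)
    nlinarith
end

section
/- Let G be a group with finite symmetric generating set S, 1 ≤ p < ∞, and suppose there exists a sequence α_n ∈ ℓ^p(G) with ‖α_n‖_{D(p)} → 0 (where ‖α‖_{D(p)}^p = Σ_{g∈S} ‖α ∗ (g-1)‖_p^p) such that for some x₀ ∈ G the values α_n(x₀) do not converge to 0. Then the first reduced ℓ^p-cohomology of G vanishes: every α ∈ D^p(G) lies in the closure of ℓ^p(G) ⊕ ℂ in D^p(G). -/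
/-!
Normalising a subsequence of `a n` by its value at `x₀` gives `b n ∈ ℓ^p` with `b n x₀ = 1` and
energy tending to `0`. The increment of `b n` along each `g⁻¹`, `g ∈ S`, is bounded by that energy,
so, `S` generating `G`, `b n → 1` pointwise. Given `α ∈ D^p(G)`, clamp it to a bounded `u` that is
close to `α` in energy (dominated convergence), and clamp `b n` to a bounded `c n`. Then
`u * c n ∈ ℓ^p`, and by the Leibniz rule the energy of `u * (1 - c n)` tends to `0`: the term
`(1 - c n) · Δu` by dominated convergence, the term `u · Δ(c n)` by the energy of `b n`. Choosing
the constant `α 1 - β 1` kills the `|·(e)|^p` term.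
-/

open Filter Topology

noncomputable def truncate (M : ℝ) (z : ℂ) : ℂ :=
  ⟨max (-M) (min M z.re), max (-M) (min M z.im)⟩

lemma abs_clamp_sub_clamp_le (M a b : ℝ) :
    |max (-M) (min M a) - max (-M) (min M b)| ≤ |a - b| := by
  simpa [Real.dist_eq] using ((LipschitzWith.id.const_min M).const_max (-M)).dist_le_mul a b

lemma norm_le_norm_of_abs_re_le_of_abs_im_le {u v : ℂ} (hre : |u.re| ≤ |v.re|)
    (him : |u.im| ≤ |v.im|) : ‖u‖ ≤ ‖v‖ := by
  rw [Complex.norm_def, Complex.norm_def, Complex.normSq_apply, Complex.normSq_apply,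
    ← abs_mul_abs_self u.re, ← abs_mul_abs_self v.re, ← abs_mul_abs_self u.im,
    ← abs_mul_abs_self v.im]
  gcongr

lemma norm_truncate_sub_truncate_le (M : ℝ) (u v : ℂ) :
    ‖truncate M u - truncate M v‖ ≤ ‖u - v‖ :=
  norm_le_norm_of_abs_re_le_of_abs_im_le (abs_clamp_sub_clamp_le M u.re v.re)
    (abs_clamp_sub_clamp_le M u.im v.im)

lemma truncate_eq_self {M : ℝ} {z : ℂ} (h : ‖z‖ ≤ M) : truncate M z = z := by
  have hre := abs_le.mp ((Complex.abs_re_le_norm z).trans h)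
  have him := abs_le.mp ((Complex.abs_im_le_norm z).trans h)
  apply Complex.ext <;> simp [truncate, hre, him]

lemma norm_truncate_le {M : ℝ} (hM : 0 ≤ M) (z : ℂ) : ‖truncate M z‖ ≤ ‖z‖ := by
  simpa [truncate_eq_self (z := 0) (by simpa using hM)] using
    norm_truncate_sub_truncate_le M z 0

lemma norm_truncate_le_two_mul {M : ℝ} (hM : 0 ≤ M) (z : ℂ) : ‖truncate M z‖ ≤ 2 * M := by
  have hclamp (t : ℝ) : |max (-M) (min M t)| ≤ M := abs_le.mpr ⟨le_max_left _ _,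
    max_le (by linarith) (min_le_left _ _)⟩
  calc ‖truncate M z‖ ≤ |max (-M) (min M z.re)| + |max (-M) (min M z.im)| :=
        Complex.norm_le_abs_re_add_abs_im _
    _ ≤ 2 * M := by linarith [hclamp z.re, hclamp z.im]

lemma continuous_truncate (M : ℝ) : Continuous (truncate M) :=
  (LipschitzWith.of_dist_le_mul (K := 1) fun u v => by
    simpa [dist_eq_norm] using norm_truncate_sub_truncate_le M u v).continuous

lemma norm_sub_truncate_sub_le (M : ℝ) (z w : ℂ) :
    ‖(z - truncate M z) - (w - truncate M w)‖ ≤ 2 * ‖z - w‖ := calc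
  _ = ‖(z - w) - (truncate M z - truncate M w)‖ := by ring_nf
  _ ≤ ‖z - w‖ + ‖z - w‖ := (norm_sub_le _ _).trans
    (add_le_add le_rfl (norm_truncate_sub_truncate_le M z w))
  _ = 2 * ‖z - w‖ := by ring

lemma Real.rpow_le_mul_rpow_of_le_mul {a b K p : ℝ} (hp : 0 ≤ p) (ha : 0 ≤ a) (hb : 0 ≤ b)
    (hK : 0 ≤ K) (h : a ≤ K * b) : a ^ p ≤ K ^ p * b ^ p :=
  (Real.rpow_le_rpow ha h hp).trans_eq (Real.mul_rpow hK hb)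

lemma Real.add_rpow_le_two_rpow_mul {a b p : ℝ} (hp : 0 ≤ p) (ha : 0 ≤ a) (hb : 0 ≤ b) :
    (a + b) ^ p ≤ 2 ^ p * (a ^ p + b ^ p) := by
  have hmax : max a b ^ p ≤ a ^ p + b ^ p := by
    rcases max_choice a b with h | h <;> rw [h]
    · linarith [Real.rpow_nonneg hb p]
    · linarith [Real.rpow_nonneg ha p]
  calc (a + b) ^ p ≤ 2 ^ p * max a b ^ p :=
        Real.rpow_le_mul_rpow_of_le_mul hp (by positivity) (le_max_of_le_left ha) zero_le_two
          (by linarith [le_max_left a b, le_max_right a b])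
    _ ≤ 2 ^ p * (a ^ p + b ^ p) := by gcongr

lemma tendsto_zero_of_tendsto_rpow {ι : Type*} {l : Filter ι} {u : ι → ℝ} {q : ℝ} (hq : 0 < q)
    (hu : ∀ i, 0 ≤ u i) (h : Tendsto (fun i => u i ^ q) l (𝓝 0)) : Tendsto u l (𝓝 0) := by
  have := h.rpow_const (p := q⁻¹) (Or.inr (by positivity))
  rw [Real.zero_rpow (by positivity)] at this
  exact this.congr fun i => Real.rpow_rpow_inv (hu i) hq.ne'

lemma tendsto_sum_tsum_of_dominated {ι γ β : Type*} {l : Filter ι} {s : Finset γ}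
    {F : ι → γ → β → ℝ} {bound : γ → β → ℝ} (hbound : ∀ g ∈ s, Summable (bound g))
    (hF0 : ∀ i g x, 0 ≤ F i g x) (hFb : ∀ i g x, F i g x ≤ bound g x)
    (hF : ∀ g ∈ s, ∀ x, Tendsto (F · g x) l (𝓝 0)) :
    Tendsto (fun i => ∑ g ∈ s, ∑' x, F i g x) l (𝓝 0) := by
  have hg : ∀ g ∈ s, Tendsto (fun i => ∑' x, F i g x) l (𝓝 0) := fun g hg => by
    simpa using tendsto_tsum_of_dominated_convergence (hbound g hg) (hF g hg)
      (.of_forall fun i x => by rw [Real.norm_of_nonneg (hF0 i g x)]; exact hFb i g x)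
  simpa using tendsto_finsetSum s hg

section DirichletEnergy

variable {G E F : Type*} [Group G] [SeminormedAddCommGroup E] [SeminormedAddCommGroup F]
  {S : Finset G} {p : ℝ}

/-- `∑_{g ∈ S} ‖f ∗ (g - 1)‖_p^p`: the `D^p(G)` norm to the power `p`, without the `|f(e)|^p`
term. -/
noncomputable def dirichletEnergy (S : Finset G) (p : ℝ) (f : G → E) : ℝ :=
  ∑ g ∈ S, ∑' x, ‖f (x * g⁻¹) - f x‖ ^ p

def MemDp (S : Finset G) (p : ℝ) (f : G → E) : Prop :=
  ∀ g ∈ S, Summable fun x => ‖f (x * g⁻¹) - f x‖ ^ p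

lemma dirichletEnergy_nonneg (f : G → E) : 0 ≤ dirichletEnergy S p f :=
  Finset.sum_nonneg fun _ _ => tsum_nonneg fun _ => Real.rpow_nonneg (norm_nonneg _) _

lemma summable_rpow_norm_of_le_mul {ι : Type*} {f : ι → E} {h : ι → F} {K : ℝ} (hp : 0 ≤ p)
    (hK : 0 ≤ K) (hfh : ∀ i, ‖f i‖ ≤ K * ‖h i‖) (hh : Summable fun i => ‖h i‖ ^ p) :
    Summable fun i => ‖f i‖ ^ p :=
  .of_nonneg_of_le (fun _ => Real.rpow_nonneg (norm_nonneg _) _)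
    (fun i => Real.rpow_le_mul_rpow_of_le_mul hp (norm_nonneg _) (norm_nonneg _) hK (hfh i))
    (hh.mul_left _)

lemma MemDp.of_norm_sub_le {f : G → E} {h : G → F} {K : ℝ} (hp : 0 ≤ p) (hK : 0 ≤ K)
    (hh : MemDp S p h) (hfh : ∀ x y, ‖f x - f y‖ ≤ K * ‖h x - h y‖) : MemDp S p f :=
  fun g hg => summable_rpow_norm_of_le_mul hp hK (fun _ => hfh _ _) (hh g hg)

lemma dirichletEnergy_le_of_norm_sub_le {f : G → E} {h : G → F} {K : ℝ} (hp : 0 ≤ p)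
    (hK : 0 ≤ K) (hh : MemDp S p h) (hfh : ∀ x y, ‖f x - f y‖ ≤ K * ‖h x - h y‖) :
    dirichletEnergy S p f ≤ K ^ p * dirichletEnergy S p h := by
  rw [dirichletEnergy, dirichletEnergy, Finset.mul_sum]
  refine Finset.sum_le_sum fun g hg => ?_
  rw [← tsum_mul_left]
  exact (MemDp.of_norm_sub_le hp hK hh hfh g hg).tsum_le_tsum
    (fun _ => Real.rpow_le_mul_rpow_of_le_mul hp (norm_nonneg _) (norm_nonneg _) hK (hfh _ _))
    ((hh g hg).mul_left _)

lemma memDp_of_summable {f : G → E} (hp : 0 ≤ p) (hf : Summable fun x => ‖f x‖ ^ p) :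
    MemDp S p f := fun g _ =>
  .of_nonneg_of_le (fun _ => Real.rpow_nonneg (norm_nonneg _) _)
    (fun _ => (Real.rpow_le_rpow (norm_nonneg _) (norm_sub_le _ _) hp).trans
      (Real.add_rpow_le_two_rpow_mul hp (norm_nonneg _) (norm_nonneg _)))
    ((((Equiv.mulRight g⁻¹).summable_iff (f := fun x => ‖f x‖ ^ p)).mpr hf).add hf |>.mul_left _)

lemma rpow_norm_sub_add_sub_le (hp : 0 ≤ p) (a b c d : E) :
    ‖(a + b) - (c + d)‖ ^ p ≤ 2 ^ p * (‖a - c‖ ^ p + ‖b - d‖ ^ p) := by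
  rw [add_sub_add_comm]
  exact (Real.rpow_le_rpow (norm_nonneg _) (norm_add_le _ _) hp).trans
    (Real.add_rpow_le_two_rpow_mul hp (norm_nonneg _) (norm_nonneg _))

lemma MemDp.add {f h : G → E} (hp : 0 ≤ p) (hf : MemDp S p f) (hh : MemDp S p h) :
    MemDp S p (f + h) := fun g hg =>
  .of_nonneg_of_le (fun _ => Real.rpow_nonneg (norm_nonneg _) _)
    (fun _ => rpow_norm_sub_add_sub_le hp _ _ _ _) (((hf g hg).add (hh g hg)).mul_left _)

lemma MemDp.neg {f : G → E} (hf : MemDp S p f) : MemDp S p (-f) := fun g hg =>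
  (hf g hg).congr fun x => by rw [Pi.neg_apply, Pi.neg_apply, neg_sub_neg, norm_sub_rev]

lemma MemDp.sub {f h : G → E} (hp : 0 ≤ p) (hf : MemDp S p f) (hh : MemDp S p h) :
    MemDp S p (f - h) := by
  simpa [sub_eq_add_neg] using hf.add hp hh.neg

lemma dirichletEnergy_add_le {f h : G → E} (hp : 0 ≤ p) (hf : MemDp S p f) (hh : MemDp S p h) :
    dirichletEnergy S p (f + h) ≤ 2 ^ p * (dirichletEnergy S p f + dirichletEnergy S p h) := by
  rw [dirichletEnergy, dirichletEnergy, dirichletEnergy, ← Finset.sum_add_distrib,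
    Finset.mul_sum]
  refine Finset.sum_le_sum fun g hg => ?_
  rw [← (hf g hg).tsum_add (hh g hg), ← tsum_mul_left]
  exact (hf.add hp hh g hg).tsum_le_tsum (fun _ => rpow_norm_sub_add_sub_le hp _ _ _ _)
    (((hf g hg).add (hh g hg)).mul_left _)

section Ring

variable {R : Type*} [NormedRing R]

lemma rpow_norm_mul_sub_mul_le {a b c d : R} {A : ℝ} (hp : 0 ≤ p) (hc : ‖c‖ ≤ A) :
    ‖a * b - c * d‖ ^ p ≤ 2 ^ p * (‖b‖ ^ p * ‖a - c‖ ^ p + A ^ p * ‖b - d‖ ^ p) := by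
  have hA : 0 ≤ A := (norm_nonneg c).trans hc
  have key : ‖a * b - c * d‖ ≤ ‖b‖ * ‖a - c‖ + A * ‖b - d‖ := calc
    ‖a * b - c * d‖ = ‖(a - c) * b + c * (b - d)‖ := by noncomm_ring
    _ ≤ ‖b‖ * ‖a - c‖ + A * ‖b - d‖ := by
      refine (norm_add_le _ _).trans (add_le_add ?_ ?_)
      · exact (norm_mul_le _ _).trans_eq (mul_comm _ _)
      · exact (norm_mul_le _ _).trans (by gcongr)
  refine (Real.rpow_le_rpow (norm_nonneg _) key hp).trans ?_
  rw [← Real.mul_rpow (norm_nonneg _) (norm_nonneg _), ← Real.mul_rpow hA (norm_nonneg _)]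
  exact Real.add_rpow_le_two_rpow_mul hp (by positivity) (by positivity)

variable {u v : G → R} {A B : ℝ}

lemma MemDp.mul (hp : 0 ≤ p) (hu : MemDp S p u) (hv : MemDp S p v) (hA : ∀ x, ‖u x‖ ≤ A)
    (hB : ∀ x, ‖v x‖ ≤ B) : MemDp S p (u * v) := fun g hg =>
  .of_nonneg_of_le (fun _ => Real.rpow_nonneg (norm_nonneg _) _)
    (fun x => (rpow_norm_mul_sub_mul_le hp (hA x)).trans <| by
      gcongr
      exact hB _)
    (((hu g hg).mul_left (B ^ p)).add ((hv g hg).mul_left (A ^ p)) |>.mul_left _)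

lemma dirichletEnergy_mul_le (hp : 0 ≤ p) (hu : MemDp S p u) (hv : MemDp S p v)
    (hA : ∀ x, ‖u x‖ ≤ A) (hB : ∀ x, ‖v x‖ ≤ B) :
    dirichletEnergy S p (u * v) ≤ 2 ^ p * (∑ g ∈ S, ∑' x, ‖v (x * g⁻¹)‖ ^ p *
      ‖u (x * g⁻¹) - u x‖ ^ p + A ^ p * dirichletEnergy S p v) := by
  have hsum : ∀ g ∈ S, Summable fun x => ‖v (x * g⁻¹)‖ ^ p * ‖u (x * g⁻¹) - u x‖ ^ p :=
    fun g hg => .of_nonneg_of_le (fun _ => by positivity)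
      (fun x => by gcongr; exact hB _) ((hu g hg).mul_left (B ^ p))
  rw [dirichletEnergy, dirichletEnergy, Finset.mul_sum, ← Finset.sum_add_distrib,
    Finset.mul_sum]
  refine Finset.sum_le_sum fun g hg => ?_
  rw [← tsum_mul_left, ← (hsum g hg).tsum_add ((hv g hg).mul_left _), ← tsum_mul_left]
  exact (hu.mul hp hv hA hB g hg).tsum_le_tsum (fun x => rpow_norm_mul_sub_mul_le hp (hA x))
    (((hsum g hg).add ((hv g hg).mul_left _)).mul_left _)

lemma tendsto_dirichletEnergy_mul {ι : Type*} {l : Filter ι} {v : ι → G → R} (hp : 0 < p)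
    (hu : MemDp S p u) (hA : ∀ x, ‖u x‖ ≤ A) (hv : ∀ i, MemDp S p (v i))
    (hB : ∀ i x, ‖v i x‖ ≤ B) (hv0 : ∀ x, Tendsto (v · x) l (𝓝 0))
    (hvE : Tendsto (fun i => dirichletEnergy S p (v i)) l (𝓝 0)) :
    Tendsto (fun i => dirichletEnergy S p (u * v i)) l (𝓝 0) := by
  have hcross : Tendsto (fun i => ∑ g ∈ S, ∑' x, ‖v i (x * g⁻¹)‖ ^ p *
      ‖u (x * g⁻¹) - u x‖ ^ p) l (𝓝 0) := by
    refine tendsto_sum_tsum_of_dominated (bound := fun g x => B ^ p * ‖u (x * g⁻¹) - u x‖ ^ p)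
      (fun g hg => (hu g hg).mul_left _) (fun _ _ _ => by positivity)
      (fun i g x => by gcongr; exact hB _ _) fun g _ x => ?_
    simpa [Real.zero_rpow hp.ne'] using
      ((hv0 (x * g⁻¹)).norm.rpow_const (Or.inr hp.le)).mul_const (‖u (x * g⁻¹) - u x‖ ^ p)
  refine squeeze_zero (fun _ => dirichletEnergy_nonneg _)
    (fun i => dirichletEnergy_mul_le hp.le hu (hv i) hA (hB i)) ?_
  simpa using ((hcross.add (hvE.const_mul (A ^ p))).const_mul (2 ^ p))

end Ring

lemma rpow_norm_sub_le_dirichletEnergy {f : G → E} (hf : MemDp S p f) {g : G} (hg : g ∈ S)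
    (x : G) : ‖f (x * g⁻¹) - f x‖ ^ p ≤ dirichletEnergy S p f :=
  ((hf g hg).le_tsum x fun _ _ => Real.rpow_nonneg (norm_nonneg _) _).trans <|
    Finset.single_le_sum (f := fun g => ∑' x, ‖f (x * g⁻¹) - f x‖ ^ p)
      (fun _ _ => tsum_nonneg fun _ => Real.rpow_nonneg (norm_nonneg _) _) hg

theorem tendsto_sub_of_tendsto_dirichletEnergy {ι : Type*} {l : Filter ι} {f : ι → G → E}
    (hgen : Subgroup.closure (S : Set G) = ⊤) (hp : 0 < p) (hf : ∀ i, MemDp S p (f i))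
    (hE : Tendsto (fun i => dirichletEnergy S p (f i)) l (𝓝 0)) (w x : G) :
    Tendsto (fun i => f i (x * w) - f i x) l (𝓝 0) := by
  have hinv : ∀ g ∈ S, ∀ x, Tendsto (fun i => f i (x * g⁻¹) - f i x) l (𝓝 0) := fun g hg x =>
    tendsto_zero_iff_norm_tendsto_zero.mpr <|
      tendsto_zero_of_tendsto_rpow hp (fun _ => norm_nonneg _) <|
        squeeze_zero (fun _ => Real.rpow_nonneg (norm_nonneg _) _)
          (fun i => rpow_norm_sub_le_dirichletEnergy (hf i) hg x) hE
  induction (hgen ▸ Subgroup.mem_top w : w ∈ Subgroup.closure (S : Set G)) using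
    Subgroup.closure_induction'' generalizing x with
  | mem g hg => simpa using (hinv g hg (x * g)).neg
  | inv_mem g hg => exact hinv g hg x
  | one => simpa using tendsto_const_nhds
  | mul u v _ _ hu hv => simpa [mul_assoc] using (hv (x * u)).add (hu x)

end DirichletEnergy

section Approximation

variable {G : Type*} [Group G] {S : Finset G} {p : ℝ}

lemma tendsto_dirichletEnergy_sub_truncate {α : G → ℂ} (hp : 0 < p) (hα : MemDp S p α) :
    Tendsto (fun M => dirichletEnergy S p (α - truncate M ∘ α)) atTop (𝓝 0) := by
  refine tendsto_sum_tsum_of_dominated (bound := fun g x => 2 ^ p * ‖α (x * g⁻¹) - α x‖ ^ p)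
    (fun g hg => (hα g hg).mul_left _) (fun _ _ _ => by positivity)
    (fun M g x => Real.rpow_le_mul_rpow_of_le_mul hp.le (norm_nonneg _) (norm_nonneg _)
      zero_le_two (norm_sub_truncate_sub_le M _ _)) fun g _ x => ?_
  refine tendsto_const_nhds.congr' ?_
  filter_upwards [eventually_ge_atTop ‖α (x * g⁻¹)‖, eventually_ge_atTop ‖α x‖] with M h₁ h₂
  simp [truncate_eq_self h₁, truncate_eq_self h₂, Real.zero_rpow hp.ne']

theorem exists_normalized_of_not_tendsto_zero (hp : 0 ≤ p) {a : ℕ → G → ℂ}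
    (ha : ∀ n, Summable fun x => ‖a n x‖ ^ p)
    (haE : Tendsto (fun n => dirichletEnergy S p (a n)) atTop (𝓝 0)) {x₀ : G}
    (hx₀ : ¬ Tendsto (fun n => a n x₀) atTop (𝓝 0)) :
    ∃ b : ℕ → G → ℂ, (∀ n, Summable fun x => ‖b n x‖ ^ p) ∧ (∀ n, b n x₀ = 1) ∧
      Tendsto (fun n => dirichletEnergy S p (b n)) atTop (𝓝 0) := by
  obtain ⟨δ, hδ, hfreq⟩ : ∃ δ > 0, ∃ᶠ n in atTop, δ ≤ ‖a n x₀‖ := by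
    simpa only [NormedAddGroup.tendsto_nhds_zero, not_forall, not_eventually, not_lt,
      exists_prop] using hx₀
  obtain ⟨φ, hφ, hδφ⟩ := extraction_of_frequently_atTop hfreq
  have hne n : a (φ n) x₀ ≠ 0 := norm_pos_iff.mp (hδ.trans_le (hδφ n))
  have hscale n : ‖(a (φ n) x₀)⁻¹‖ ^ p ≤ δ⁻¹ ^ p :=
    Real.rpow_le_rpow (norm_nonneg _) (by rw [norm_inv]; exact inv_anti₀ hδ (hδφ n)) hp
  refine ⟨fun n => (a (φ n) x₀)⁻¹ • a (φ n), fun n => ?_, fun n => inv_mul_cancel₀ (hne n), ?_⟩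
  · exact summable_rpow_norm_of_le_mul hp (norm_nonneg _)
      (fun x => (norm_smul (a (φ n) x₀)⁻¹ (a (φ n) x)).le) (ha (φ n))
  · refine squeeze_zero (fun _ => dirichletEnergy_nonneg _) (fun n =>
      (dirichletEnergy_le_of_norm_sub_le hp (norm_nonneg _) (memDp_of_summable hp (ha (φ n)))
        fun x y => le_of_eq (by simp [← mul_sub])).trans
      (mul_le_mul_of_nonneg_right (hscale n) (dirichletEnergy_nonneg _))) ?_
    simpa using (haE.comp hφ.tendsto_atTop).const_mul (δ⁻¹ ^ p)

theorem exists_summable_dirichletEnergy_sub_lt_of_bounded (hp : 0 < p) {b : ℕ → G → ℂ}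
    (hb : ∀ n, Summable fun x => ‖b n x‖ ^ p) (hb1 : ∀ x, Tendsto (b · x) atTop (𝓝 1))
    (hbE : Tendsto (fun n => dirichletEnergy S p (b n)) atTop (𝓝 0)) {u : G → ℂ} {A : ℝ}
    (hu : MemDp S p u) (hA : ∀ x, ‖u x‖ ≤ A) {η : ℝ} (hη : 0 < η) :
    ∃ β : G → ℂ, (Summable fun x => ‖β x‖ ^ p) ∧ dirichletEnergy S p (u - β) < η := by
  set c : ℕ → G → ℂ := fun n => truncate 1 ∘ b n
  have hvb n x y : ‖(1 - c n) x - (1 - c n) y‖ ≤ 1 * ‖b n x - b n y‖ := by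
    rw [one_mul, norm_sub_rev (b n x)]
    convert norm_truncate_sub_truncate_le 1 (b n y) (b n x) using 2
    simp [c]
  have hv n : MemDp S p (1 - c n) :=
    (memDp_of_summable hp.le (hb n)).of_norm_sub_le hp.le zero_le_one (hvb n)
  have hvE : Tendsto (fun n => dirichletEnergy S p (1 - c n)) atTop (𝓝 0) :=
    squeeze_zero (fun _ => dirichletEnergy_nonneg _) (fun n => dirichletEnergy_le_of_norm_sub_le
      hp.le zero_le_one (memDp_of_summable hp.le (hb n)) (hvb n)) (by simpa using hbE)
  have hv0 x : Tendsto (fun n => (1 - c n) x) atTop (𝓝 0) := by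
    simpa [c, truncate_eq_self (M := 1) (z := 1) (by simp)] using
      (tendsto_const_nhds (x := (1 : ℂ))).sub (((continuous_truncate 1).tendsto 1).comp (hb1 x))
  have hvB n x : ‖(1 - c n) x‖ ≤ 3 := calc
    ‖(1 - c n) x‖ ≤ ‖(1 : ℂ)‖ + ‖truncate 1 (b n x)‖ := norm_sub_le _ _
    _ ≤ 1 + 2 * 1 := by
      gcongr
      · simp
      · exact norm_truncate_le_two_mul zero_le_one _
    _ = 3 := by norm_num
  obtain ⟨k, hk⟩ :=
    ((tendsto_dirichletEnergy_mul hp hu hA hv hvB hv0 hvE).eventually_lt_const hη).exists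
  refine ⟨u * c k, summable_rpow_norm_of_le_mul hp.le (K := A) ((norm_nonneg _).trans (hA 1))
    (fun x => ?_) (hb k), ?_⟩
  · exact (norm_mul_le _ _).trans (mul_le_mul (hA x) (norm_truncate_le zero_le_one _)
      (norm_nonneg _) ((norm_nonneg _).trans (hA x)))
  rwa [show u - u * c k = u * (1 - c k) by ring]

theorem exists_summable_dirichletEnergy_sub_lt (hp : 0 < p) {b : ℕ → G → ℂ}
    (hb : ∀ n, Summable fun x => ‖b n x‖ ^ p) (hb1 : ∀ x, Tendsto (b · x) atTop (𝓝 1))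
    (hbE : Tendsto (fun n => dirichletEnergy S p (b n)) atTop (𝓝 0)) {α : G → ℂ}
    (hα : MemDp S p α) {η : ℝ} (hη : 0 < η) :
    ∃ β : G → ℂ, (Summable fun x => ‖β x‖ ^ p) ∧ dirichletEnergy S p (α - β) < η := by
  set η' := η / (2 * 2 ^ p) with hη'def
  have hη' : 0 < η' := by positivity
  obtain ⟨M, hM, hαM⟩ : ∃ M, 0 ≤ M ∧ dirichletEnergy S p (α - truncate M ∘ α) < η' :=
    ((eventually_ge_atTop 0).and
      ((tendsto_dirichletEnergy_sub_truncate hp hα).eventually_lt_const hη')).exists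
  set u := truncate M ∘ α
  have hu : MemDp S p u := hα.of_norm_sub_le hp.le zero_le_one fun x y =>
    (norm_truncate_sub_truncate_le M (α x) (α y)).trans_eq (one_mul _).symm
  obtain ⟨β, hβ, huβ⟩ := exists_summable_dirichletEnergy_sub_lt_of_bounded hp hb hb1 hbE hu
    (fun x => norm_truncate_le_two_mul hM _) hη'
  refine ⟨β, hβ, ?_⟩
  calc dirichletEnergy S p (α - β)
      ≤ 2 ^ p * (dirichletEnergy S p (α - u) + dirichletEnergy S p (u - β)) := by
        simpa using dirichletEnergy_add_le hp.le (hα.sub hp.le hu)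
          (hu.sub hp.le (memDp_of_summable hp.le hβ))
    _ < 2 ^ p * (η' + η') := by gcongr
    _ = η := by rw [hη'def]; field_simp; ring

end Approximation

theorem reduced_lp_cohomology_vanishes_general {G : Type*} [Group G] (S : Finset G)
    (hgen : Subgroup.closure (S : Set G) = ⊤)
    (p : ℝ) (hp : 1 ≤ p)
    (a : ℕ → G → ℂ)
    (halp : ∀ n, Summable (fun x : G => ‖a n x‖ ^ p))
    (hanorm : Filter.Tendsto
      (fun n => (∑ g ∈ S, ∑' x : G, ‖a n (x * g⁻¹) - a n x‖ ^ p) ^ (1 / p))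
      Filter.atTop (nhds 0))
    (x₀ : G)
    (hx₀ : ¬ Filter.Tendsto (fun n => a n x₀) Filter.atTop (nhds 0)) :
    ∀ α : G → ℂ, (∀ g ∈ S, Summable (fun x : G => ‖α (x * g⁻¹) - α x‖ ^ p)) →
      ∀ ε : ℝ, 0 < ε → ∃ (β : G → ℂ) (c : ℂ),
        Summable (fun x : G => ‖β x‖ ^ p) ∧
        ((∑ g ∈ S, ∑' x : G,
            ‖((α (x * g⁻¹) - β (x * g⁻¹) - c)) - ((α x - β x - c))‖ ^ p) +
          ‖α 1 - β 1 - c‖ ^ p) ^ (1 / p) < ε := by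
  intro α hα ε hε
  have hp0 : 0 < p := by linarith
  have haE : Tendsto (fun n => dirichletEnergy S p (a n)) atTop (𝓝 0) :=
    tendsto_zero_of_tendsto_rpow (one_div_pos.mpr hp0) (fun _ => dirichletEnergy_nonneg _) hanorm
  obtain ⟨b, hb, hbx₀, hbE⟩ := exists_normalized_of_not_tendsto_zero hp0.le halp haE hx₀
  have hb1 x : Tendsto (b · x) atTop (𝓝 1) := by
    simpa [hbx₀] using (tendsto_sub_of_tendsto_dirichletEnergy hgen hp0
      (fun n => memDp_of_summable hp0.le (hb n)) hbE (x₀⁻¹ * x) x₀).add_const 1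
  obtain ⟨β, hβ, hβE⟩ :=
    exists_summable_dirichletEnergy_sub_lt hp0 hb hb1 hbE hα (Real.rpow_pos_of_pos hε p)
  refine ⟨β, α 1 - β 1, hβ, ?_⟩
  simp only [sub_sub_sub_cancel_right, sub_self, norm_zero, Real.zero_rpow hp0.ne', add_zero]
  change dirichletEnergy S p (α - β) ^ (1 / p) < ε
  rw [one_div, Real.rpow_inv_lt_iff_of_pos (dirichletEnergy_nonneg _) hε.le hp0]
  exact hβE

/-- Sufficient condition for vanishing of the first reduced `ℓ^p`-cohomology:
if there is a sequence `α_n ∈ ℓ^p(G)` with `‖α_n‖_{D(p)} → 0` whose values at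
some point `x₀` do not tend to `0`, then every `α ∈ D^p(G)` lies in the closure
of `ℓ^p(G) ⊕ ℂ` in the `D^p(G)` norm. -/
theorem reduced_lp_cohomology_vanishes {G : Type*} [Group G] (S : Finset G)
    (hsym : ∀ g ∈ S, g⁻¹ ∈ S) (hgen : Subgroup.closure (S : Set G) = ⊤)
    (p : ℝ) (hp : 1 ≤ p)
    (a : ℕ → G → ℂ)
    (halp : ∀ n, Summable (fun x : G => ‖a n x‖ ^ p))
    (hanorm : Filter.Tendsto
      (fun n => (∑ g ∈ S, ∑' x : G, ‖a n (x * g⁻¹) - a n x‖ ^ p) ^ (1 / p))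
      Filter.atTop (nhds 0))
    (x₀ : G)
    (hx₀ : ¬ Filter.Tendsto (fun n => a n x₀) Filter.atTop (nhds 0)) :
    ∀ α : G → ℂ, (∀ g ∈ S, Summable (fun x : G => ‖α (x * g⁻¹) - α x‖ ^ p)) →
      ∀ ε : ℝ, 0 < ε → ∃ (β : G → ℂ) (c : ℂ),
        Summable (fun x : G => ‖β x‖ ^ p) ∧
        ((∑ g ∈ S, ∑' x : G,
            ‖((α (x * g⁻¹) - β (x * g⁻¹) - c)) - ((α x - β x - c))‖ ^ p) +
          ‖α 1 - β 1 - c‖ ^ p) ^ (1 / p) < ε :=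
  reduced_lp_cohomology_vanishes_general S hgen p hp a halp hanorm x₀ hx₀
end

section
/- Let G be a group with finite symmetric generating set S and 1 ≤ p < ∞. Let α ∈ D^p(G) be nonnegative real-valued, and let β_n ∈ D^p(G) be a sequence of nonnegative functions with β_n(x) → ∞ pointwise for every x ∈ G and ‖β_n‖_{D(p)} → 0. Then ‖α - min(α, β_n)‖_{D(p)} → 0 as n → ∞, where min is taken pointwise and ‖γ‖_{D(p)} = (Σ_{g∈S} Σ_{x∈G} |γ(x g⁻¹) - γ(x)|^p)^{1/p}. -/
open scoped BigOperators

private lemma trunc_abs_le (a b c d : ℝ) :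
    |(a - min a b) - (c - min c d)| ≤ |a - c| + |b - d| := by
  have h1 : a - min a b = max (a - b) 0 := by
    rcases le_total a b with h | h
    · simp [min_eq_left h, max_eq_right (by linarith : a - b ≤ 0)]
    · simp [min_eq_right h, max_eq_left (by linarith : 0 ≤ a - b)]
  have h2 : c - min c d = max (c - d) 0 := by
    rcases le_total c d with h | h
    · simp [min_eq_left h, max_eq_right (by linarith : c - d ≤ 0)]
    · simp [min_eq_right h, max_eq_left (by linarith : 0 ≤ c - d)]
  rw [h1, h2]
  calc |max (a - b) 0 - max (c - d) 0| ≤ |(a - b) - (c - d)| :=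
        abs_max_sub_max_le_abs _ _ _
    _ = |(a - c) - (b - d)| := by ring_nf
    _ ≤ |a - c| + |b - d| := abs_sub _ _

private lemma rpow_add_le (p : ℝ) (hp : 0 ≤ p) {x y : ℝ} (hx : 0 ≤ x) (hy : 0 ≤ y) :
    (x + y) ^ p ≤ 2 ^ p * (x ^ p + y ^ p) := by
  have hmax : (0:ℝ) ≤ max x y := le_trans hx (le_max_left _ _)
  have h1 : (x + y) ^ p ≤ (2 * max x y) ^ p := by
    apply Real.rpow_le_rpow (by linarith) _ hp
    rcases le_total x y with h | h
    · rw [max_eq_right h]; linarith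
    · rw [max_eq_left h]; linarith
  have h2 : (2 * max x y) ^ p = 2 ^ p * (max x y) ^ p :=
    Real.mul_rpow (by norm_num) hmax
  have h3 : (max x y) ^ p ≤ x ^ p + y ^ p := by
    rcases le_total x y with h | h
    · rw [max_eq_right h]
      have : (0:ℝ) ≤ x ^ p := Real.rpow_nonneg hx p
      linarith
    · rw [max_eq_left h]
      have : (0:ℝ) ≤ y ^ p := Real.rpow_nonneg hy p
      linarith
  calc (x + y) ^ p ≤ 2 ^ p * (max x y) ^ p := by rw [← h2]; exact h1
    _ ≤ 2 ^ p * (x ^ p + y ^ p) := by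
        have : (0:ℝ) ≤ (2:ℝ) ^ p := Real.rpow_nonneg (by norm_num) p
        nlinarith

private lemma key_bound (p : ℝ) (hp : 1 ≤ p) (a b c d : ℝ) :
    |(a - min a b) - (c - min c d)| ^ p ≤
      2 ^ p * (|a - c| ^ p * (if a ≤ b ∧ c ≤ d then (0:ℝ) else 1) + |b - d| ^ p) := by
  have hp0 : (0:ℝ) ≤ p := by linarith
  by_cases h : a ≤ b ∧ c ≤ d
  · rw [if_pos h, min_eq_left h.1, min_eq_left h.2]
    simp only [sub_self, abs_zero, mul_zero, zero_add]
    rw [Real.zero_rpow (by linarith : p ≠ 0)]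
    positivity
  · rw [if_neg h, mul_one]
    calc |(a - min a b) - (c - min c d)| ^ p ≤ (|a - c| + |b - d|) ^ p :=
          Real.rpow_le_rpow (abs_nonneg _) (trunc_abs_le a b c d) hp0
      _ ≤ 2 ^ p * (|a - c| ^ p + |b - d| ^ p) :=
          rpow_add_le p hp0 (abs_nonneg _) (abs_nonneg _)

/-- Truncation lemma: if `α ∈ D^p(G)` is nonnegative and `β_n` are nonnegative
functions in `D^p(G)` with `β_n → ∞` pointwise and `‖β_n‖_{D(p)} → 0`, then
`‖α - min(α, β_n)‖_{D(p)} → 0`. -/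
theorem truncation_tendsto_zero {G : Type*} [Group G] (S : Finset G)
    (hsym : ∀ g ∈ S, g⁻¹ ∈ S)
    (p : ℝ) (hp : 1 ≤ p)
    (α : G → ℝ) (hαpos : ∀ x, 0 ≤ α x)
    (hαmem : ∀ g ∈ S, Summable (fun x : G => |α (x * g⁻¹) - α x| ^ p))
    (β : ℕ → G → ℝ) (hβpos : ∀ n x, 0 ≤ β n x)
    (hβmem : ∀ n, ∀ g ∈ S, Summable (fun x : G => |β n (x * g⁻¹) - β n x| ^ p))
    (hβinf : ∀ x : G, Filter.Tendsto (fun n => β n x) Filter.atTop Filter.atTop)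
    (hβnorm : Filter.Tendsto
      (fun n => (∑ g ∈ S, ∑' x : G, |β n (x * g⁻¹) - β n x| ^ p) ^ (1 / p))
      Filter.atTop (nhds 0)) :
    Filter.Tendsto
      (fun n => (∑ g ∈ S, ∑' x : G,
        |(α (x * g⁻¹) - min (α (x * g⁻¹)) (β n (x * g⁻¹))) -
          (α x - min (α x) (β n x))| ^ p) ^ (1 / p))
      Filter.atTop (nhds 0) := by
  have hp0 : (0:ℝ) < p := lt_of_lt_of_le one_pos hp
  have hpne : p ≠ 0 := ne_of_gt hp0
  -- notation
  set χ : ℕ → G → G → ℝ := fun n g x =>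
    if α (x * g⁻¹) ≤ β n (x * g⁻¹) ∧ α x ≤ β n x then (0:ℝ) else 1 with hχ
  -- the β-norm sum M n tends to 0
  set M : ℕ → ℝ := fun n => ∑ g ∈ S, ∑' x : G, |β n (x * g⁻¹) - β n x| ^ p with hM
  have hMnonneg : ∀ n, 0 ≤ M n := fun n =>
    Finset.sum_nonneg fun g _ => tsum_nonneg fun x => Real.rpow_nonneg (abs_nonneg _) p
  have hMzero : Filter.Tendsto M Filter.atTop (nhds 0) := by
    have h1 : Filter.Tendsto (fun n => ((M n) ^ (1/p)) ^ p) Filter.atTop (nhds ((0:ℝ) ^ p)) :=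
      hβnorm.rpow_const (Or.inr (le_of_lt hp0))
    rw [Real.zero_rpow hpne] at h1
    have h2 : ∀ n, ((M n) ^ (1/p)) ^ p = M n := fun n => by
      rw [one_div]; exact Real.rpow_inv_rpow (hMnonneg n) hpne
    simpa only [h2] using h1
  -- for each g ∈ S, the inner tsum tends to 0
  have hterm : ∀ g ∈ S, Filter.Tendsto
      (fun n => ∑' x : G,
        |(α (x * g⁻¹) - min (α (x * g⁻¹)) (β n (x * g⁻¹))) -
          (α x - min (α x) (β n x))| ^ p) Filter.atTop (nhds 0) := by
    intro g hg
    set F : ℕ → G → ℝ := fun n x =>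
      |(α (x * g⁻¹) - min (α (x * g⁻¹)) (β n (x * g⁻¹))) -
          (α x - min (α x) (β n x))| ^ p with hF
    set A : ℕ → G → ℝ := fun n x => |α (x * g⁻¹) - α x| ^ p * χ n g x with hA
    set B : ℕ → G → ℝ := fun n x => |β n (x * g⁻¹) - β n x| ^ p with hB
    have hkey : ∀ n x, F n x ≤ 2 ^ p * (A n x + B n x) := by
      intro n x
      have := key_bound p hp (α (x * g⁻¹)) (β n (x * g⁻¹)) (α x) (β n x)
      simpa only [hF, hA, hB, hχ] using this
    have hAsummable : ∀ n, Summable (A n) := by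
      intro n
      apply Summable.of_nonneg_of_le
        (fun x => mul_nonneg (Real.rpow_nonneg (abs_nonneg _) _)
          (by simp only [hχ]; split_ifs <;> norm_num))
        (fun x => ?_) (hαmem g hg)
      · simp only [hA, hχ]
        split_ifs with h
        · simp [Real.rpow_nonneg (abs_nonneg _) p]
        · simp
    have hBsummable : ∀ n, Summable (B n) := fun n => hβmem n g hg
    have hboundsummable : ∀ n, Summable (fun x => 2 ^ p * (A n x + B n x)) :=
      fun n => ((hAsummable n).add (hBsummable n)).mul_left _
    have hFsummable : ∀ n, Summable (F n) := fun n =>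
      Summable.of_nonneg_of_le (fun x => Real.rpow_nonneg (abs_nonneg _) p)
        (hkey n) (hboundsummable n)
    -- U n := ∑' A n tends to zero by dominated convergence
    have hU : Filter.Tendsto (fun n => ∑' x, A n x) Filter.atTop (nhds 0) := by
      have := tendsto_tsum_of_dominated_convergence (𝓕 := Filter.atTop)
        (f := A) (g := fun _ : G => (0:ℝ))
        (bound := fun x => |α (x * g⁻¹) - α x| ^ p) (hαmem g hg)
        (fun x => ?_) ?_
      · simpa using this
      · -- pointwise convergence to 0
        have h1 : ∀ᶠ n in Filter.atTop, α x ≤ β n x :=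
          (hβinf x).eventually_ge_atTop (α x)
        have h2 : ∀ᶠ n in Filter.atTop, α (x * g⁻¹) ≤ β n (x * g⁻¹) :=
          (hβinf (x * g⁻¹)).eventually_ge_atTop (α (x * g⁻¹))
        have : ∀ᶠ n in Filter.atTop, A n x = 0 := by
          filter_upwards [h1, h2] with n hn1 hn2
          simp [hA, hχ, hn1, hn2]
        exact Filter.Tendsto.congr' (Filter.EventuallyEq.symm this) tendsto_const_nhds
      · -- bound
        filter_upwards with n x
        simp only [hA, hχ, Real.norm_eq_abs]
        split_ifs with h
        · simp [Real.rpow_nonneg (abs_nonneg _) p]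
        · simp [abs_of_nonneg (Real.rpow_nonneg (abs_nonneg _) p)]
    -- V n := ∑' B n is ≤ M n
    have hV : ∀ n, ∑' x, B n x ≤ M n := by
      intro n
      exact Finset.single_le_sum
        (f := fun g' => ∑' x : G, |β n (x * g'⁻¹) - β n x| ^ p)
        (fun g' _ => tsum_nonneg fun x => Real.rpow_nonneg (abs_nonneg _) p) hg
    -- squeeze
    apply squeeze_zero (fun n => tsum_nonneg fun x => Real.rpow_nonneg (abs_nonneg _) p)
      (g := fun n => 2 ^ p * (∑' x, A n x) + 2 ^ p * M n)
    · intro n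
      calc ∑' x, F n x ≤ ∑' x, 2 ^ p * (A n x + B n x) :=
            Summable.tsum_le_tsum (hkey n) (hFsummable n) (hboundsummable n)
        _ = 2 ^ p * ((∑' x, A n x) + ∑' x, B n x) := by
            rw [tsum_mul_left, Summable.tsum_add (hAsummable n) (hBsummable n)]
        _ ≤ 2 ^ p * (∑' x, A n x) + 2 ^ p * M n := by
            have h2p : (0:ℝ) ≤ 2 ^ p := Real.rpow_nonneg (by norm_num) p
            have := hV n
            nlinarith
    · have := (hU.const_mul ((2:ℝ) ^ p)).add (hMzero.const_mul ((2:ℝ) ^ p))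
      simpa using this
  -- conclude
  have hsum : Filter.Tendsto
      (fun n => ∑ g ∈ S, ∑' x : G,
        |(α (x * g⁻¹) - min (α (x * g⁻¹)) (β n (x * g⁻¹))) -
          (α x - min (α x) (β n x))| ^ p) Filter.atTop (nhds 0) := by
    have := Filter.Tendsto.congr (fun n => rfl)
      (tendsto_finset_sum S (fun g hg => hterm g hg))
    simpa using this
  have final := hsum.rpow_const (p := 1/p) (Or.inr (by positivity))
  rwa [Real.zero_rpow (by positivity : 1/p ≠ 0)] at final
end

section
/- Let G be a group with finite symmetric generating set S. The map T : D^p(G) → Z¹(G, ℓ^p(G)) given by (Tα)(g) = α ∗ (g - 1) (i.e., (Tα)(g)(x) = α(x g⁻¹) - α(x)) is a surjective linear map whose kernel is exactly the constant functions; consequently Z¹(G, ℓ^p(G)) is linearly isomorphic to D^p(G)/ℂ. -/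
open scoped BigOperators

/-- The map `T : D^p(G) → Z¹(G, ℓ^p(G))`, `(Tα)(g)(x) = α (x g⁻¹) - α x`, is
surjective onto the `ℓ^p`-valued 1-cocycles, and its kernel consists exactly of
the constant functions; hence `Z¹(G, ℓ^p(G)) ≅ D^p(G)/ℂ`. -/
theorem cocycle_surjective_and_kernel {G : Type*} [Group G] (S : Finset G)
    (hsym : ∀ g ∈ S, g⁻¹ ∈ S) (hgen : Subgroup.closure (S : Set G) = ⊤)
    (p : ℝ) (hp : 1 ≤ p) :
    (∀ δ : G → G → ℂ,
      (∀ g : G, Summable (fun x : G => ‖δ g x‖ ^ p)) →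
      (∀ g h x : G, δ (g * h) x = δ h (x * g⁻¹) + δ g x) →
      ∃ α : G → ℂ,
        (∀ g ∈ S, Summable (fun x : G => ‖α (x * g⁻¹) - α x‖ ^ p)) ∧
        ∀ g x : G, δ g x = α (x * g⁻¹) - α x) ∧
    (∀ α : G → ℂ,
      ((∀ g ∈ S, ∀ x : G, α (x * g⁻¹) - α x = 0) ↔ ∃ c : ℂ, ∀ x : G, α x = c)) := by
  constructor
  · intro δ hsum hcoc
    set β : G → ℂ := fun k => δ k 1 with hβ
    have hδ1 : ∀ x : G, δ 1 x = 0 := by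
      intro x
      have h := hcoc 1 1 x
      simp only [one_mul, inv_one, mul_one] at h
      linear_combination -h
    -- representation via β
    have hrep : ∀ g x : G, δ g x = β (x⁻¹ * g) - β x⁻¹ := by
      intro g x
      have h := hcoc x⁻¹ g 1
      simp only [one_mul, inv_inv] at h
      simp only [hβ]
      linear_combination -h
    -- functional equation for β
    have hF : ∀ y g h : G, β (y * (g * h)) + β (g * y) = β (g * y * h) + β (y * g) := by
      intro y g h
      have h1 := hcoc g h y⁻¹
      rw [hrep (g * h) y⁻¹, hrep h (y⁻¹ * g⁻¹), hrep g y⁻¹] at h1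
      simp only [inv_inv, mul_inv_rev] at h1
      linear_combination h1
    -- β is trace-like
    have hcomm : ∀ u v : G, β (u * v) = β (v * u) := by
      intro u v
      set d : ℂ := β (u * v) - β (v * u) with hd
      set c : G := v * u * v⁻¹ * u⁻¹ with hc
      have hA : ∀ z : G, β z - β (c * z) = d := by
        intro z
        have h := hF u v (v⁻¹ * (u⁻¹ * z))
        have e1 : u * (v * (v⁻¹ * (u⁻¹ * z))) = z := by group
        have e2 : v * u * (v⁻¹ * (u⁻¹ * z)) = c * z := by rw [hc]; group
        rw [e1, e2] at h
        linear_combination h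
      have hB : ∀ n : ℕ, β (c ^ n) = -(n : ℂ) * d := by
        intro n
        induction n with
        | zero => simpa using hδ1 1
        | succ n ih =>
          have h := hA (c ^ n)
          have e : c * c ^ n = c ^ (n + 1) := by rw [pow_succ']
          rw [e] at h
          push_cast
          linear_combination ih - h
      have hd0 : d = 0 := by
        by_cases htor : ∃ m : ℕ, 0 < m ∧ c ^ m = 1
        · obtain ⟨m, hm, hcm⟩ := htor
          have h2 := hB m
          rw [hcm] at h2
          have h1 : β (1 : G) = 0 := by simpa using hδ1 1
          rw [h1] at h2
          have hm' : (m : ℂ) ≠ 0 := Nat.cast_ne_zero.mpr hm.ne'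
          have h4 : (m : ℂ) * d = 0 := by linear_combination h2
          exact (mul_eq_zero.mp h4).resolve_left hm'
        · push_neg at htor
          have key : ∀ a b : ℕ, a < b → c ^ a ≠ c ^ b := by
            intro a b hlt heq
            have h3 : c ^ a * c ^ (b - a) = c ^ a * 1 := by
              rw [mul_one, ← pow_add, Nat.add_sub_cancel' hlt.le, heq]
            exact htor (b - a) (Nat.sub_pos_of_lt hlt) (mul_left_cancel h3)
          have hinj : Function.Injective (fun n : ℕ => (c ^ n)⁻¹) := by
            intro a b hab
            simp only [inv_inj] at hab
            rcases lt_trichotomy a b with hlt | heq | hlt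
            · exact absurd hab (key a b hlt)
            · exact heq
            · exact absurd hab.symm (key b a hlt)
          have hval : ∀ n : ℕ, δ c ((c ^ n)⁻¹) = -d := by
            intro n
            rw [hrep]
            simp only [inv_inv]
            rw [← pow_succ c n, hB, hB n]
            push_cast
            ring
          have hsumc : Summable ((fun x : G => ‖δ c x‖ ^ p) ∘ fun n : ℕ => (c ^ n)⁻¹) :=
            (hsum c).comp_injective hinj
          have hconst : Summable (fun _ : ℕ => ‖d‖ ^ p) := by
            refine hsumc.congr fun n => ?_
            simp [Function.comp, hval n]
          have h0 : ‖d‖ ^ p = 0 := summable_const_iff _ |>.mp hconst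
          have hp0 : p ≠ 0 := by positivity
          have : ‖d‖ = 0 :=
            ((Real.rpow_eq_zero_iff_of_nonneg (norm_nonneg d)).mp h0).1
          exact norm_eq_zero.mp this
      linear_combination hd0
    refine ⟨fun x => β x⁻¹, ?_, ?_⟩
    · intro g _
      have : (fun x : G => ‖β (x * g⁻¹)⁻¹ - β x⁻¹‖ ^ p) = fun x : G => ‖δ g x‖ ^ p := by
        funext x
        rw [hrep g x, hcomm (x⁻¹) g]
        simp [mul_inv_rev]
      rw [this]
      exact hsum g
    · intro g x
      rw [hrep g x, hcomm (x⁻¹) g]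
      simp [mul_inv_rev]
  · intro α
    constructor
    · intro h
      refine ⟨α 1, fun x => ?_⟩
      have key : ∀ g : G, ∀ y : G, α (y * g⁻¹) = α y := by
        have : Subgroup.closure (S : Set G) ≤
            { carrier := {g : G | ∀ y : G, α (y * g⁻¹) = α y}
              one_mem' := by intro y; simp
              mul_mem' := by
                intro a b ha hb y
                simp only [Set.mem_setOf_eq] at ha hb ⊢
                rw [mul_inv_rev, ← mul_assoc, ha, hb]
              inv_mem' := by
                intro a ha y
                simp only [Set.mem_setOf_eq, inv_inv] at ha ⊢
                have := ha (y * a)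
                simpa using this.symm } := by
          rw [Subgroup.closure_le]
          intro g hg y
          have := h g hg y
          simpa [sub_eq_zero] using this
        intro g y
        have hg : g ∈ Subgroup.closure (S : Set G) := by rw [hgen]; trivial
        exact this hg y
      have := key x⁻¹ 1
      simpa using this
    · rintro ⟨c, hc⟩ g _ x
      simp [hc]
end

section
/- Let G be a group with finite symmetric generating set S and p ≥ 1. Then D^p(G), the space of functions α : G → ℂ with α ∗ (g-1) ∈ ℓ^p(G) for all g ∈ S, equipped with the norm ‖α‖_{D^p(G)} = (Σ_{g∈S} ‖α ∗ (g-1)‖_p^p + |α(e)|^p)^{1/p}, is a Banach space (i.e., this norm is complete). -/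
open scoped BigOperators

open Filter

private lemma Dp_pow_add {p : ℝ} (hp : 1 ≤ p) (a b : ℂ) :
    ‖a + b‖ ^ p ≤ 2 ^ p * (‖a‖ ^ p + ‖b‖ ^ p) := by
  have hp0 : (0:ℝ) ≤ p := le_trans zero_le_one hp
  have h1 : ‖a + b‖ ≤ 2 * max ‖a‖ ‖b‖ := by
    calc ‖a + b‖ ≤ ‖a‖ + ‖b‖ := norm_add_le a b
    _ ≤ 2 * max ‖a‖ ‖b‖ := by
        rcases le_total ‖a‖ ‖b‖ with h | h
        · rw [max_eq_right h]; linarith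
        · rw [max_eq_left h]; linarith
  have hmn : (0:ℝ) ≤ max ‖a‖ ‖b‖ := le_max_of_le_left (norm_nonneg _)
  calc ‖a + b‖ ^ p ≤ (2 * max ‖a‖ ‖b‖) ^ p :=
        Real.rpow_le_rpow (norm_nonneg _) h1 hp0
  _ = 2 ^ p * (max ‖a‖ ‖b‖) ^ p := Real.mul_rpow (by norm_num) hmn
  _ ≤ 2 ^ p * (‖a‖ ^ p + ‖b‖ ^ p) := by
      have : (max ‖a‖ ‖b‖) ^ p ≤ ‖a‖ ^ p + ‖b‖ ^ p := by
        rcases max_cases ‖a‖ ‖b‖ with ⟨h, _⟩ | ⟨h, _⟩ <;> rw [h]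
        · nlinarith [Real.rpow_nonneg (norm_nonneg b) p]
        · nlinarith [Real.rpow_nonneg (norm_nonneg a) p]
      have h2 : (0:ℝ) ≤ 2 ^ p := Real.rpow_nonneg (by norm_num) p
      nlinarith

private lemma Dp_summable_add {G : Type*} {p : ℝ} (hp : 1 ≤ p) (f h : G → ℂ)
    (hf : Summable (fun x => ‖f x‖ ^ p)) (hh : Summable (fun x => ‖h x‖ ^ p)) :
    Summable (fun x => ‖f x + h x‖ ^ p) :=
  Summable.of_nonneg_of_le (fun x => Real.rpow_nonneg (norm_nonneg _) p)
    (fun x => Dp_pow_add hp (f x) (h x)) (((hf.add hh).mul_left (2 ^ p)))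

set_option maxHeartbeats 1000000 in
/-- Completeness of `D^p(G)`: every Cauchy sequence in the `D^p(G)` norm
converges to an element of `D^p(G)`. -/
theorem Dp_complete {G : Type*} [Group G] (S : Finset G)
    (hsym : ∀ g ∈ S, g⁻¹ ∈ S) (hgen : Subgroup.closure (S : Set G) = ⊤)
    (p : ℝ) (hp : 1 ≤ p)
    (α : ℕ → G → ℂ)
    (hmem : ∀ n, ∀ g ∈ S, Summable (fun x : G => ‖α n (x * g⁻¹) - α n x‖ ^ p))
    (hcauchy : ∀ ε : ℝ, 0 < ε → ∃ N : ℕ, ∀ m n : ℕ, N ≤ m → N ≤ n →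
      ((∑ g ∈ S, ∑' x : G,
          ‖(α m (x * g⁻¹) - α n (x * g⁻¹)) - (α m x - α n x)‖ ^ p) +
        ‖α m 1 - α n 1‖ ^ p) ^ (1 / p) < ε) :
    ∃ β : G → ℂ,
      (∀ g ∈ S, Summable (fun x : G => ‖β (x * g⁻¹) - β x‖ ^ p)) ∧
      Filter.Tendsto
        (fun n => ((∑ g ∈ S, ∑' x : G,
            ‖(α n (x * g⁻¹) - β (x * g⁻¹)) - (α n x - β x)‖ ^ p) +
          ‖α n 1 - β 1‖ ^ p) ^ (1 / p))
        Filter.atTop (nhds 0) := by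
  have hp0 : (0:ℝ) < p := lt_of_lt_of_le one_pos hp
  have hp0' : p ≠ 0 := ne_of_gt hp0
  -- a ≤ T ^ (1/p) whenever a^p ≤ T and a ≥ 0
  have key : ∀ a T : ℝ, 0 ≤ a → a ^ p ≤ T → a ≤ T ^ (1/p) := by
    intro a T ha h
    have h1 : a = (a ^ p) ^ (1/p) := by
      rw [one_div, Real.rpow_rpow_inv ha hp0']
    rw [h1]
    exact Real.rpow_le_rpow (Real.rpow_nonneg ha p) h (by positivity)
  -- summability of differences of differences
  have hsub : ∀ m n, ∀ g ∈ S,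
      Summable (fun x : G =>
        ‖(α m (x * g⁻¹) - α n (x * g⁻¹)) - (α m x - α n x)‖ ^ p) := by
    intro m n g hg
    have := Dp_summable_add hp (fun x => α m (x * g⁻¹) - α m x)
      (fun x => -(α n (x * g⁻¹) - α n x)) (hmem m g hg)
      ((hmem n g hg).congr fun x => by rw [norm_neg])
    refine this.congr fun x => ?_
    congr 1
    congr 1
    ring
  -- nonnegativity of the Dp expression
  have Tnn : ∀ γ : G → ℂ,
      0 ≤ (∑ g ∈ S, ∑' x : G, ‖γ (x * g⁻¹) - γ x‖ ^ p) + ‖γ 1‖ ^ p := by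
    intro γ
    have h1 : 0 ≤ ∑ g ∈ S, ∑' x : G, ‖γ (x * g⁻¹) - γ x‖ ^ p :=
      Finset.sum_nonneg fun g _ => tsum_nonneg fun x => Real.rpow_nonneg (norm_nonneg _) p
    have h2 : (0:ℝ) ≤ ‖γ 1‖ ^ p := Real.rpow_nonneg (norm_nonneg _) p
    linarith
  -- word-length bound
  have word : ∀ x : G, ∃ k : ℕ, ∀ (γ : G → ℂ) (M : ℝ),
      (∀ g ∈ S, ∀ y : G, ‖γ (y * g⁻¹) - γ y‖ ≤ M) →
      ∀ z : G, ‖γ (z * x) - γ z‖ ≤ k * M := by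
    intro x
    have hx : x ∈ Subgroup.closure (S : Set G) := hgen ▸ Subgroup.mem_top x
    induction hx using Subgroup.closure_induction with
    | mem s hs =>
        refine ⟨1, fun γ M hγ z => ?_⟩
        have := hγ s⁻¹ (hsym s hs) z
        simpa using this
    | one => exact ⟨0, fun γ M hγ z => by simp⟩
    | mul a b _ _ ha hb =>
        obtain ⟨k₁, h₁⟩ := ha; obtain ⟨k₂, h₂⟩ := hb
        refine ⟨k₂ + k₁, fun γ M hγ z => ?_⟩
        have hA := h₁ γ M hγ z
        have hB := h₂ γ M hγ (z * a)
        calc ‖γ (z * (a * b)) - γ z‖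
            = ‖(γ (z * a * b) - γ (z * a)) + (γ (z * a) - γ z)‖ := by
              rw [mul_assoc]; ring_nf
        _ ≤ ‖γ (z * a * b) - γ (z * a)‖ + ‖γ (z * a) - γ z‖ := norm_add_le _ _
        _ ≤ k₂ * M + k₁ * M := add_le_add hB hA
        _ = (↑(k₂ + k₁)) * M := by push_cast; ring
    | inv a _ ha =>
        obtain ⟨k, h⟩ := ha
        refine ⟨k, fun γ M hγ z => ?_⟩
        have := h γ M hγ (z * a⁻¹)
        rw [inv_mul_cancel_right] at this
        calc ‖γ (z * a⁻¹) - γ z‖ = ‖γ z - γ (z * a⁻¹)‖ := norm_sub_rev _ _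
        _ ≤ k * M := this
  -- pointwise Cauchy
  have hptc : ∀ x : G, CauchySeq (fun n => α n x) := by
    intro x
    obtain ⟨k, hk⟩ := word x
    rw [Metric.cauchySeq_iff]
    intro ε hε
    have hε' : (0:ℝ) < ε / (k + 2) := by positivity
    obtain ⟨N, hN⟩ := hcauchy _ hε'
    refine ⟨N, fun m hm n hn => ?_⟩
    set γ : G → ℂ := fun y => α m y - α n y with hγdef
    set T : ℝ := (∑ g ∈ S, ∑' x : G, ‖γ (x * g⁻¹) - γ x‖ ^ p) + ‖γ 1‖ ^ p with hT
    have hTlt : T ^ (1/p) < ε / (k + 2) := hN m n hm hn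
    set M : ℝ := T ^ (1/p) with hM
    have hM0 : 0 ≤ M := Real.rpow_nonneg (Tnn γ) _
    have hbound : ∀ g ∈ S, ∀ y : G, ‖γ (y * g⁻¹) - γ y‖ ≤ M := by
      intro g hg y
      refine key _ _ (norm_nonneg _) ?_
      have h1 : ‖γ (y * g⁻¹) - γ y‖ ^ p ≤ ∑' x : G, ‖γ (x * g⁻¹) - γ x‖ ^ p :=
        Summable.le_tsum (hsub m n g hg) y fun j _ => Real.rpow_nonneg (norm_nonneg _) p
      have h2 : ∑' x : G, ‖γ (x * g⁻¹) - γ x‖ ^ p ≤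
          ∑ g ∈ S, ∑' x : G, ‖γ (x * g⁻¹) - γ x‖ ^ p :=
        Finset.single_le_sum (f := fun g => ∑' x : G, ‖γ (x * g⁻¹) - γ x‖ ^ p)
          (fun g _ => tsum_nonneg fun x => Real.rpow_nonneg (norm_nonneg _) p) hg
      have h3 : (0:ℝ) ≤ ‖γ 1‖ ^ p := Real.rpow_nonneg (norm_nonneg _) p
      rw [hT] at *
      linarith
    have hval : ‖γ 1‖ ≤ M := by
      refine key _ _ (norm_nonneg _) ?_
      have h1 : 0 ≤ ∑ g ∈ S, ∑' x : G, ‖γ (x * g⁻¹) - γ x‖ ^ p :=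
        Finset.sum_nonneg fun g _ => tsum_nonneg fun x => Real.rpow_nonneg (norm_nonneg _) p
      rw [hT]; linarith
    have hx : ‖γ x‖ ≤ (k + 1) * M := by
      have h1 := hk γ M hbound 1
      rw [one_mul] at h1
      calc ‖γ x‖ = ‖(γ x - γ 1) + γ 1‖ := by ring_nf
      _ ≤ ‖γ x - γ 1‖ + ‖γ 1‖ := norm_add_le _ _
      _ ≤ k * M + M := add_le_add h1 hval
      _ = (k + 1) * M := by ring
    rw [dist_eq_norm]
    calc ‖α m x - α n x‖ = ‖γ x‖ := rfl
    _ ≤ (k + 1) * M := hx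
    _ < (k + 2) * (ε / (k + 2)) := by
        have hk1 : (0:ℝ) < k + 1 := by positivity
        have : ((k:ℝ) + 1) * M ≤ (k + 1) * (ε / (k+2)) := by
          rcases lt_or_ge M (ε / (k+2)) with h | h
          · nlinarith
          · nlinarith [hTlt]
        have h2 : ((k:ℝ) + 1) * (ε / (k+2)) < (k + 2) * (ε / (k+2)) := by
          have := hε'
          nlinarith
        linarith
    _ = ε := by field_simp
  -- the pointwise limit
  choose β hβ using fun x => cauchySeq_tendsto_of_complete (hptc x)
  -- key estimate: finite-sum bound at the limit
  have keyest : ∀ ε : ℝ, 0 < ε → ∃ N : ℕ, ∀ m, N ≤ m → ∀ F : Finset G,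
      (∑ g ∈ S, ∑ x ∈ F, ‖(α m (x * g⁻¹) - β (x * g⁻¹)) - (α m x - β x)‖ ^ p) +
        ‖α m 1 - β 1‖ ^ p ≤ ε ^ p := by
    intro ε hε
    obtain ⟨N, hN⟩ := hcauchy ε hε
    refine ⟨N, fun m hm F => ?_⟩
    have hlim : Tendsto (fun n =>
        (∑ g ∈ S, ∑ x ∈ F, ‖(α m (x * g⁻¹) - α n (x * g⁻¹)) - (α m x - α n x)‖ ^ p) +
          ‖α m 1 - α n 1‖ ^ p) atTop (nhds
        ((∑ g ∈ S, ∑ x ∈ F, ‖(α m (x * g⁻¹) - β (x * g⁻¹)) - (α m x - β x)‖ ^ p) +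
          ‖α m 1 - β 1‖ ^ p)) := by
      refine Tendsto.add ?_ ?_
      · refine tendsto_finset_sum _ fun g _ => tendsto_finset_sum _ fun x _ => ?_
        refine Filter.Tendsto.rpow_const ?_ (Or.inr hp0.le)
        refine Filter.Tendsto.norm ?_
        exact ((tendsto_const_nhds.sub (hβ (x * g⁻¹))).sub
          (tendsto_const_nhds.sub (hβ x)))
      · refine Filter.Tendsto.rpow_const ?_ (Or.inr hp0.le)
        exact (tendsto_const_nhds.sub (hβ 1)).norm
    refine le_of_tendsto hlim ?_
    filter_upwards [eventually_ge_atTop N] with n hn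
    have hTlt := hN m n hm hn
    set T : ℝ := (∑ g ∈ S, ∑' x : G,
        ‖(α m (x * g⁻¹) - α n (x * g⁻¹)) - (α m x - α n x)‖ ^ p) +
        ‖α m 1 - α n 1‖ ^ p with hT
    have hTnn : 0 ≤ T := Tnn (fun y => α m y - α n y)
    have hTle : T ≤ ε ^ p := by
      have h1 : T = (T ^ (1/p)) ^ p := by
        rw [one_div, Real.rpow_inv_rpow hTnn hp0']
      rw [h1]
      exact Real.rpow_le_rpow (Real.rpow_nonneg hTnn _) hTlt.le hp0.le
    have hfin : (∑ g ∈ S, ∑ x ∈ F, ‖(α m (x * g⁻¹) - α n (x * g⁻¹)) - (α m x - α n x)‖ ^ p)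
        ≤ ∑ g ∈ S, ∑' x : G, ‖(α m (x * g⁻¹) - α n (x * g⁻¹)) - (α m x - α n x)‖ ^ p := by
      refine Finset.sum_le_sum fun g hg => ?_
      exact Summable.sum_le_tsum F (fun x _ => Real.rpow_nonneg (norm_nonneg _) p) (hsub m n g hg)
    rw [hT] at hTle
    linarith
  -- summability of limit differences
  have hsummable : ∀ ε : ℝ, 0 < ε → ∃ N : ℕ, ∀ m, N ≤ m → ∀ g ∈ S,
      Summable (fun x : G => ‖(α m (x * g⁻¹) - β (x * g⁻¹)) - (α m x - β x)‖ ^ p) := by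
    intro ε hε
    obtain ⟨N, hN⟩ := keyest ε hε
    refine ⟨N, fun m hm g hg => ?_⟩
    refine summable_of_sum_le (c := ε ^ p)
      (fun x => Real.rpow_nonneg (norm_nonneg _) p) fun F => ?_
    have h1 := hN m hm F
    have h2 : (∑ x ∈ F, ‖(α m (x * g⁻¹) - β (x * g⁻¹)) - (α m x - β x)‖ ^ p)
        ≤ ∑ g ∈ S, ∑ x ∈ F, ‖(α m (x * g⁻¹) - β (x * g⁻¹)) - (α m x - β x)‖ ^ p :=
      Finset.single_le_sum
        (f := fun g => ∑ x ∈ F, ‖(α m (x * g⁻¹) - β (x * g⁻¹)) - (α m x - β x)‖ ^ p)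
        (fun g _ => Finset.sum_nonneg fun x _ =>
          Real.rpow_nonneg (norm_nonneg _) p) hg
    have h3 : (0:ℝ) ≤ ‖α m 1 - β 1‖ ^ p := Real.rpow_nonneg (norm_nonneg _) p
    linarith
  -- first conjunct: β ∈ D^p
  have hβmem : ∀ g ∈ S, Summable (fun x : G => ‖β (x * g⁻¹) - β x‖ ^ p) := by
    intro g hg
    obtain ⟨N, hN⟩ := hsummable 1 one_pos
    have h1 : Summable (fun x : G =>
        ‖(β (x * g⁻¹) - α N (x * g⁻¹)) - (β x - α N x)‖ ^ p) := by
      have := hN N le_rfl g hg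
      refine this.congr fun x => ?_
      rw [show (β (x * g⁻¹) - α N (x * g⁻¹)) - (β x - α N x)
        = -((α N (x * g⁻¹) - β (x * g⁻¹)) - (α N x - β x)) by ring, norm_neg]
    have := Dp_summable_add hp
      (fun x => (β (x * g⁻¹) - α N (x * g⁻¹)) - (β x - α N x))
      (fun x => α N (x * g⁻¹) - α N x) h1 (hmem N g hg)
    refine this.congr fun x => ?_
    congr 2
    ring
  refine ⟨β, hβmem, ?_⟩
  -- second conjunct: convergence in D^p norm
  rw [Metric.tendsto_atTop]
  intro ε hε
  have hε2 : (0:ℝ) < ε / 2 := by positivity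
  obtain ⟨N₁, hN₁⟩ := keyest _ hε2
  obtain ⟨N₂, hN₂⟩ := hsummable _ hε2
  refine ⟨max N₁ N₂, fun m hm => ?_⟩
  have hm1 : N₁ ≤ m := le_trans (le_max_left _ _) hm
  have hm2 : N₂ ≤ m := le_trans (le_max_right _ _) hm
  set T : ℝ := (∑ g ∈ S, ∑' x : G,
      ‖(α m (x * g⁻¹) - β (x * g⁻¹)) - (α m x - β x)‖ ^ p) +
      ‖α m 1 - β 1‖ ^ p with hT
  have hTnn : 0 ≤ T := Tnn (fun y => α m y - β y)
  have hTle : T ≤ (ε/2) ^ p := by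
    -- via HasSum nets
    have hsum : ∀ g ∈ S, Summable (fun x : G =>
        ‖(α m (x * g⁻¹) - β (x * g⁻¹)) - (α m x - β x)‖ ^ p) := hN₂ m hm2
    have hnet : Tendsto (fun F : Finset G =>
        (∑ g ∈ S, ∑ x ∈ F, ‖(α m (x * g⁻¹) - β (x * g⁻¹)) - (α m x - β x)‖ ^ p) +
          ‖α m 1 - β 1‖ ^ p) atTop (nhds T) := by
      rw [hT]
      refine Tendsto.add ?_ tendsto_const_nhds
      exact tendsto_finset_sum _ fun g hg => (hsum g hg).hasSum
    refine le_of_tendsto hnet (Filter.Eventually.of_forall fun F => hN₁ m hm1 F)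
  have hdist : T ^ (1/p) ≤ ε / 2 := by
    have h1 : (ε/2) = ((ε/2) ^ p) ^ (1/p) := by
      rw [one_div, Real.rpow_rpow_inv hε2.le hp0']
    rw [h1]
    exact Real.rpow_le_rpow hTnn hTle (by positivity)
  rw [Real.dist_eq, sub_zero, abs_of_nonneg (Real.rpow_nonneg hTnn _)]
  linarith
end
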